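/- arXiv:1405.4851 — 11 statements merged into one kernel-verified Lean document; each statement's English description precedes it below -/
import Mathlib

section
/- Let G be a compactly generated totally disconnected locally compact group with compact generating set X, and let U be a compact open subgroup of G. Then there exists a finite symmetric set A ⊆ G containing 1 such that X ⊆ AU and UAU = AU. Moreover, for any finite symmetric set A containing 1 with X ⊆ AU and UAU = AU, one has G = ⟨A⟩U. -/
open Pointwise

/-!
Saturating `X ∪ X⁻¹ ∪ {1}` on both sides by `U` gives a compact, symmetric, bi-`U`-invariant
set `S`; compactness covers it by finitely many cosets `aU`, and symmetrizing these
representatives gives `A` with `AU = S`. Conversely, `UAU = AU` says `UA ⊆ AU`, which for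
symmetric `A` propagates to `U⟨A⟩ ⊆ ⟨A⟩U`; hence `⟨A⟩U` is a subgroup, and it contains
`X`.
-/

theorem Submonoid.mul_closure_subset_closure_mul {M : Type*} [Monoid M] {U A : Set M}
    (h : U * A ⊆ A * U) : U * closure A ⊆ closure A * U := by
  rw [Set.mul_subset_iff]
  intro u hu g hg
  induction hg using closure_induction_left generalizing u with
  | one => exact ⟨1, one_mem _, u, hu, by simp⟩
  | mul_left a ha g _ ih =>
    obtain ⟨a', ha', u', hu', hau⟩ := h (Set.mul_mem_mul hu ha)
    obtain ⟨c, hc, u'', hu'', hcu⟩ := ih u' hu'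
    refine ⟨a' * c, mul_mem (subset_closure ha') hc, u'', hu'', ?_⟩
    dsimp only at hau hcu ⊢
    rw [mul_assoc, hcu, ← mul_assoc, hau, mul_assoc]

theorem Subgroup.coe_sup_of_mul_subset {G : Type*} [Group G] {H K : Subgroup G}
    (h : (K : Set G) * H ⊆ H * K) : ((H ⊔ K : Subgroup G) : Set G) = H * K := by
  have mul_closed : (H * K : Set G) * (H * K) ⊆ H * K :=
    calc (H * K : Set G) * (H * K) = H * (K * H) * K := by simp only [mul_assoc]
      _ ⊆ H * (H * K) * K := by gcongr
      _ = H * K := by rw [← mul_assoc, coe_mul_coe, mul_assoc, coe_mul_coe]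
  have inv_closed : (H * K : Set G)⁻¹ ⊆ H * K := by rwa [mul_inv_rev, inv_coe_set, inv_coe_set]
  let L : Subgroup G :=
    { carrier := H * K
      one_mem' := ⟨1, H.one_mem, 1, K.one_mem, mul_one 1⟩
      mul_mem' := fun hx hy => mul_closed (Set.mul_mem_mul hx hy)
      inv_mem' := fun hx => inv_closed (Set.inv_mem_inv.mpr hx) }
  refine subset_antisymm (show H ⊔ K ≤ L from sup_le ?_ ?_) ?_
  · exact fun x hx => ⟨x, hx, 1, K.one_mem, mul_one x⟩
  · exact fun x hx => ⟨1, H.one_mem, x, hx, one_mul x⟩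
  · exact Set.mul_subset_iff.mpr fun x hx y hy => mul_mem (mem_sup_left hx) (mem_sup_right hy)

theorem IsCompact.exists_finite_subset_mul_eq {G : Type*} [Group G] [TopologicalSpace G]
    [ContinuousMul G] {S U : Set G} (hS : IsCompact S) (hU : IsOpen U) (h1U : 1 ∈ U)
    (hSU : S * U = S) : ∃ t ⊆ S, t.Finite ∧ t * U = S := by
  have hcover : S ⊆ ⋃ s ∈ S, s • U := fun s hs =>
    Set.mem_biUnion hs ⟨1, h1U, mul_one s⟩
  obtain ⟨t, htS, htfin, htcov⟩ :=
    hS.elim_finite_subcover_image (fun s _ => hU.leftCoset s) hcover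
  refine ⟨t, htS, htfin, subset_antisymm ?_ ?_⟩
  · exact hSU ▸ Set.mul_subset_mul_right htS
  · rwa [Set.iUnion_smul_set] at htcov

theorem IsCompact.exists_finite_symmetric_mul_eq {G : Type*} [Group G] [TopologicalSpace G]
    [ContinuousMul G] {S U : Set G} (hS : IsCompact S) (hSinv : S⁻¹ = S) (h1S : 1 ∈ S)
    (hU : IsOpen U) (h1U : 1 ∈ U) (hSU : S * U = S) :
    ∃ A : Set G, A.Finite ∧ A⁻¹ = A ∧ 1 ∈ A ∧ A * U = S := by
  obtain ⟨t, htS, htfin, htU⟩ := hS.exists_finite_subset_mul_eq hU h1U hSU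
  have hAS : insert 1 (t ∪ t⁻¹) ⊆ S :=
    Set.insert_subset h1S (Set.union_subset htS (hSinv ▸ Set.inv_subset_inv.mpr htS))
  refine ⟨insert 1 (t ∪ t⁻¹), (htfin.union htfin.inv).insert 1, ?_, Set.mem_insert 1 _,
    subset_antisymm (hSU ▸ Set.mul_subset_mul_right hAS) ?_⟩
  · rw [Set.inv_insert, Set.union_inv, inv_inv, inv_one, Set.union_comm]
  · exact htU ▸ Set.mul_subset_mul_right (Set.subset_union_left.trans (Set.subset_insert 1 _))

theorem Subgroup.closure_mul_eq_univ {G : Type*} [Group G] {X A : Set G} {U : Subgroup G}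
    (hX : closure X = ⊤) (hA : A⁻¹ = A) (hXA : X ⊆ A * (U : Set G))
    (hUA : (U : Set G) * A ⊆ A * U) :
    (closure A : Set G) * (U : Set G) = Set.univ := by
  have hcl : (closure A : Set G) = Submonoid.closure A := by
    rw [← coe_toSubmonoid, closure_toSubmonoid, hA, Set.union_self]
  have hcomm : (U : Set G) * closure A ⊆ closure A * U :=
    hcl ▸ Submonoid.mul_closure_subset_closure_mul hUA
  have htop : closure A ⊔ U = ⊤ := by
    rw [eq_top_iff, ← hX, closure_le, coe_sup_of_mul_subset hcomm]
    exact hXA.trans (Set.mul_subset_mul_right subset_closure)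
  rw [← coe_sup_of_mul_subset hcomm, htop, coe_top]

theorem factor_lemma_general (G : Type*) [Group G] [TopologicalSpace G] [IsTopologicalGroup G]
    (X : Set G) (hXc : IsCompact X) (hXgen : Subgroup.closure X = ⊤)
    (U : Subgroup G) (hUc : IsCompact (U : Set G)) (hUo : IsOpen (U : Set G)) :
    (∃ A : Set G, A.Finite ∧ A⁻¹ = A ∧ (1 : G) ∈ A ∧
        X ⊆ A * (U : Set G) ∧ (U : Set G) * A * (U : Set G) = A * (U : Set G)) ∧
    (∀ A : Set G, A.Finite → A⁻¹ = A → (1 : G) ∈ A →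
        X ⊆ A * (U : Set G) → (U : Set G) * A * (U : Set G) = A * (U : Set G) →
        ((Subgroup.closure A : Set G)) * (U : Set G) = Set.univ) := by
  refine ⟨?_, fun A _ hAinv _ hXA hUAU => Subgroup.closure_mul_eq_univ hXgen hAinv hXA ?_⟩
  · set Y : Set G := insert 1 (X ∪ X⁻¹)
    set S : Set G := U * Y * U
    have hUU : (U : Set G) * U = U := coe_mul_coe U
    have hYS : Y ⊆ S := (Set.subset_mul_right _ U.one_mem).trans (Set.subset_mul_left _ U.one_mem)
    have hXS : X ⊆ S := Set.subset_union_left.trans ((Set.subset_insert 1 _).trans hYS)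
    have hSinv : S⁻¹ = S := by
      simp only [S, Y, mul_inv_rev, inv_coe_set, Set.inv_insert, Set.union_inv, inv_inv,
        inv_one, Set.union_comm, mul_assoc]
    have hUS : (U : Set G) * S = S := by simp only [S, ← mul_assoc, hUU]
    have hSU : S * U = S := by simp only [S, mul_assoc, hUU]
    obtain ⟨A, hAfin, hAinv, h1A, hAU⟩ :=
      ((hUc.mul ((hXc.union hXc.inv).insert 1)).mul hUc).exists_finite_symmetric_mul_eq hSinv
        (hYS (Set.mem_insert 1 _)) hUo U.one_mem hSU
    exact ⟨A, hAfin, hAinv, h1A, hAU ▸ hXS, by rw [mul_assoc, hAU, hUS]⟩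
  · exact hUAU ▸ Set.subset_mul_left _ U.one_mem

/-- For a compactly generated t.d.l.c. group `G` with compact generating set `X` and a
compact open subgroup `U`, there is a finite symmetric set `A ∋ 1` with `X ⊆ AU` and
`UAU = AU`; moreover any such `A` satisfies `G = ⟨A⟩U`. -/
theorem factor_lemma (G : Type*) [Group G] [TopologicalSpace G] [IsTopologicalGroup G]
    [LocallyCompactSpace G] [TotallyDisconnectedSpace G]
    (X : Set G) (hXc : IsCompact X) (hXgen : Subgroup.closure X = ⊤)
    (U : Subgroup G) (hUc : IsCompact (U : Set G)) (hUo : IsOpen (U : Set G)) :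
    (∃ A : Set G, A.Finite ∧ A⁻¹ = A ∧ (1 : G) ∈ A ∧
        X ⊆ A * (U : Set G) ∧ (U : Set G) * A * (U : Set G) = A * (U : Set G)) ∧
    (∀ A : Set G, A.Finite → A⁻¹ = A → (1 : G) ∈ A →
        X ⊆ A * (U : Set G) → (U : Set G) * A * (U : Set G) = A * (U : Set G) →
        ((Subgroup.closure A : Set G)) * (U : Set G) = Set.univ) :=
  factor_lemma_general G X hXc hXgen U hUc hUo
end

section
/- Let G be a group and 𝒜 a collection of closed subgroups of a topological group G that is conjugation invariant (gCg⁻¹ ∈ 𝒜 for all C ∈ 𝒜, g ∈ G) and hereditary (every closed subgroup of a member of 𝒜 is in 𝒜). Define N_𝒜 to be the set of g ∈ G such that for every C ∈ 𝒜, the closed subgroup topologically generated by g and C belongs to 𝒜. Then N_𝒜 is a normal subgroup of G. -/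
/-!
Write `⟨g, C⟩` for the closed subgroup generated by `g` and `C`. Everything rests on one
observation: if `g ∈ E` and `C ≤ E` for a member `E` of `𝒜`, then `⟨g, C⟩ ≤ E` (as `E` is
closed), so `⟨g, C⟩ ∈ 𝒜` by heredity. For `g, h` in the core and `C ∈ 𝒜`, the subgroup
`⟨g, ⟨h, C⟩⟩ ∈ 𝒜` contains `g * h` and `C`; likewise `⟨g, C⟩` contains `g⁻¹` and `C`.
For normality, `x⟨g, x⁻¹Cx⟩x⁻¹ ∈ 𝒜` contains `xgx⁻¹` and `C`.
-/

lemma le_map_conj_of_map_conj_inv_le {G : Type*} [Group G] {C D : Subgroup G} {x : G}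
    (h : C.map (MulAut.conj x⁻¹).toMonoidHom ≤ D) : C ≤ D.map (MulAut.conj x).toMonoidHom := by
  intro c hc
  exact ⟨x⁻¹ * c * x, by simpa using h (Subgroup.mem_map_of_mem _ hc), by simp [mul_assoc]⟩

section

variable {G : Type*} [Group G] [TopologicalSpace G] [IsTopologicalGroup G]

def closedGen (g : G) (C : Subgroup G) : Subgroup G :=
  (Subgroup.closure ({g} ∪ (C : Set G))).topologicalClosure

lemma mem_closedGen (g : G) (C : Subgroup G) : g ∈ closedGen g C :=
  Subgroup.le_topologicalClosure _ (Subgroup.subset_closure (Set.mem_union_left _ rfl))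

lemma le_closedGen (g : G) (C : Subgroup G) : C ≤ closedGen g C := fun _ hc =>
  Subgroup.le_topologicalClosure _ (Subgroup.subset_closure (Set.mem_union_right _ hc))

lemma closedGen_le {g : G} {C E : Subgroup G} (hE : IsClosed (E : Set G)) (hg : g ∈ E)
    (hC : C ≤ E) : closedGen g C ≤ E := by
  refine Subgroup.topologicalClosure_minimal _ ?_ hE
  rw [Subgroup.closure_le, Set.union_subset_iff, Set.singleton_subset_iff]
  exact ⟨hg, hC⟩

lemma closedGen_mem_of_le {𝒜 : Set (Subgroup G)}
    (hher : ∀ C ∈ 𝒜, ∀ D : Subgroup G, IsClosed (D : Set G) → D ≤ C → D ∈ 𝒜)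
    {E : Subgroup G} (hE𝒜 : E ∈ 𝒜) (hE : IsClosed (E : Set G)) {g : G} {C : Subgroup G}
    (hg : g ∈ E) (hC : C ≤ E) : closedGen g C ∈ 𝒜 :=
  hher E hE𝒜 _ (Subgroup.closure _).isClosed_topologicalClosure (closedGen_le hE hg hC)

/-- The subgroup `N_𝒜`. -/
def coreSubgroup (𝒜 : Set (Subgroup G)) (hclosed : ∀ C ∈ 𝒜, IsClosed (C : Set G))
    (hher : ∀ C ∈ 𝒜, ∀ D : Subgroup G, IsClosed (D : Set G) → D ≤ C → D ∈ 𝒜) :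
    Subgroup G where
  carrier := {g | ∀ C ∈ 𝒜, closedGen g C ∈ 𝒜}
  one_mem' _ hC := closedGen_mem_of_le hher hC (hclosed _ hC) (one_mem _) le_rfl
  mul_mem' {g h} hg hh C hC :=
    closedGen_mem_of_le hher (hg _ (hh C hC)) (hclosed _ (hg _ (hh C hC)))
      (mul_mem (mem_closedGen g _) (le_closedGen g _ (mem_closedGen h C)))
      ((le_closedGen h C).trans (le_closedGen g _))
  inv_mem' {g} hg C hC :=
    closedGen_mem_of_le hher (hg C hC) (hclosed _ (hg C hC))
      (inv_mem (mem_closedGen g C)) (le_closedGen g C)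

lemma coreSubgroup_normal {𝒜 : Set (Subgroup G)} (hclosed : ∀ C ∈ 𝒜, IsClosed (C : Set G))
    (hconj : ∀ C ∈ 𝒜, ∀ g : G, C.map (MulAut.conj g).toMonoidHom ∈ 𝒜)
    (hher : ∀ C ∈ 𝒜, ∀ D : Subgroup G, IsClosed (D : Set G) → D ≤ C → D ∈ 𝒜) :
    (coreSubgroup 𝒜 hclosed hher).Normal := by
  refine ⟨fun g hg x C hC => ?_⟩
  have hE : (closedGen g (C.map (MulAut.conj x⁻¹).toMonoidHom)).map
      (MulAut.conj x).toMonoidHom ∈ 𝒜 := hconj _ (hg _ (hconj C hC x⁻¹)) x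
  exact closedGen_mem_of_le hher hE (hclosed _ hE)
    (Subgroup.mem_map_of_mem _ (mem_closedGen _ _))
    (le_map_conj_of_map_conj_inv_le (le_closedGen _ _))

end

/-- If `𝒜` is a conjugation-invariant and hereditary collection of closed subgroups of a
topological group `G`, then the `𝒜`-core `N_𝒜` (the set of `g` such that for every
`C ∈ 𝒜` the closed subgroup topologically generated by `g` and `C` lies in `𝒜`) is a
normal subgroup of `G`. -/
theorem core_is_normal_subgroup (G : Type*) [Group G] [TopologicalSpace G]
    [IsTopologicalGroup G] (𝒜 : Set (Subgroup G))
    (hclosed : ∀ C ∈ 𝒜, IsClosed (C : Set G))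
    (hconj : ∀ C ∈ 𝒜, ∀ g : G, C.map (MulAut.conj g).toMonoidHom ∈ 𝒜)
    (hher : ∀ C ∈ 𝒜, ∀ D : Subgroup G, IsClosed (D : Set G) → D ≤ C → D ∈ 𝒜) :
    ∃ N : Subgroup G, N.Normal ∧
      (N : Set G) =
        {g : G | ∀ C ∈ 𝒜, (Subgroup.closure ({g} ∪ (C : Set G))).topologicalClosure ∈ 𝒜} :=
  ⟨coreSubgroup 𝒜 hclosed hher, coreSubgroup_normal hclosed hconj hher, rfl⟩
end

section
/- Let G be a totally disconnected locally compact second countable group and define SIN(G) as the set of g ∈ G such that for every C in the SIN-family and every compact open subgroup V of G there is an open subgroup W of V normalized by the closed subgroup generated by g and C (i.e., ⟨g,C⟩-bar lies in the SIN-family). Then SIN(G) is a closed subgroup of G. -/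
/-!
Let `g` lie in the closure of the SIN-core and `C` in the SIN-family. If `G` has no compact open
subgroup, every closed subgroup is in the SIN-family; otherwise `C` normalizes a compact open
subgroup `W₀`. The closure `E` of `⟨W₀, C⟩` is again in the SIN-family: inside a given open `W₁`
normalized by `C`, the intersection of the `W₀`-conjugates of `W₁` is open (by compactness of `W₀`)
and normalized by both `W₀` and `C`. Now pick `h` in the SIN-core with `h ∈ g W₀`. The closure of
`⟨h, E⟩` is in the SIN-family and contains `g` and `C`, so its closed subgroup generated by `g`
and `C` is in the SIN-family too.
-/

open Pointwise

/-- The SIN-family of a topological group: closed subgroups `C` such that every compact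
open subgroup `V` contains an open subgroup `W` normalized by `C`. -/
def SINFamily (G : Type*) [Group G] [TopologicalSpace G] : Set (Subgroup G) :=
  {C : Subgroup G | IsClosed (C : Set G) ∧
    ∀ V : Subgroup G, IsCompact (V : Set G) → IsOpen (V : Set G) →
      ∃ W : Subgroup G, IsOpen (W : Set G) ∧ W ≤ V ∧ C ≤ Subgroup.normalizer (W : Set G)}

/-- The SIN-core of `G`: elements `g` such that for every `C` in the SIN-family, the
closure of `⟨g, C⟩` again belongs to the SIN-family. -/
def SINCore (G : Type*) [Group G] [TopologicalSpace G] [IsTopologicalGroup G] : Set G :=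
  {g : G | ∀ C ∈ SINFamily G,
    (Subgroup.closure ({g} ∪ (C : Set G))).topologicalClosure ∈ SINFamily G}

namespace Subgroup

variable {G : Type*} [Group G]

/-- `⋂_{x ∈ K} x H x⁻¹`, the largest subgroup of `H` normalized by `K`. -/
def conjCore (K H : Subgroup G) : Subgroup G :=
  ⨅ x ∈ K, H.map (MulAut.conj x).toMonoidHom

theorem mem_conjCore {K H : Subgroup G} {k : G} :
    k ∈ K.conjCore H ↔ ∀ x ∈ K, x⁻¹ * k * x ∈ H := by
  simp only [conjCore, mem_iInf, mem_map_equiv, MulAut.conj_symm_apply]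

theorem conjCore_le (K H : Subgroup G) : K.conjCore H ≤ H := fun k hk => by
  simpa using mem_conjCore.1 hk 1 K.one_mem

theorem le_normalizer_conjCore (K H : Subgroup G) : K ≤ normalizer (K.conjCore H : Set G) := by
  refine le_normalizer_iff.2 fun y hy k hk => mem_conjCore.2 fun x hx => ?_
  have hyx : y⁻¹ * x ∈ K := K.mul_mem (K.inv_mem hy) hx
  simpa [mul_assoc] using mem_conjCore.1 hk _ hyx

theorem normalizer_inf_normalizer_le_normalizer_conjCore (K H : Subgroup G) :
    normalizer (K : Set G) ⊓ normalizer (H : Set G) ≤ normalizer (K.conjCore H : Set G) := by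
  refine le_normalizer_iff.2 fun c ⟨hcK, hcH⟩ k hk => mem_conjCore.2 fun x hx => ?_
  have hx' : c⁻¹ * x * c ∈ K := by
    simpa using (mem_normalizer_iff.1 (inv_mem hcK) x).1 hx
  simpa [mul_assoc] using (mem_normalizer_iff.1 hcH _).1 (mem_conjCore.1 hk _ hx')

variable [TopologicalSpace G] [IsTopologicalGroup G]

/-- Finitely many cosets `z H` cover the compact `K`, and then `K.conjCore H` is the
intersection of the finitely many open subgroups `z H z⁻¹`. -/
theorem isOpen_conjCore {K H : Subgroup G} (hK : IsCompact (K : Set G))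
    (hH : IsOpen (H : Set G)) : IsOpen (K.conjCore H : Set G) := by
  obtain ⟨t, ht⟩ := hK.elim_finite_subcover (fun x : K => (x : G) • (H : Set G))
    (fun x => hH.smul _) fun y hy => Set.mem_iUnion.2 ⟨⟨y, hy⟩, 1, H.one_mem, mul_one y⟩
  have hcore : (K.conjCore H : Set G) =
      ⋂ z ∈ t, (fun k => (z : G)⁻¹ * k * z) ⁻¹' (H : Set G) := by
    ext k
    simp only [Set.mem_iInter, Set.mem_preimage, SetLike.mem_coe]
    refine ⟨fun hk z _ => mem_conjCore.1 hk z z.2, fun hk => mem_conjCore.2 fun x hx => ?_⟩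
    obtain ⟨z, hzt, w, hw, rfl⟩ := Set.mem_iUnion₂.1 (ht hx)
    show ((z : G) * w)⁻¹ * k * (z * w) ∈ H
    rw [show ((z : G) * w)⁻¹ * k * (z * w) = w⁻¹ * ((z : G)⁻¹ * k * z) * w by group]
    exact H.mul_mem (H.mul_mem (H.inv_mem hw) (hk z hzt)) hw
  rw [hcore]
  exact isOpen_biInter_finset fun z _ => hH.preimage (by fun_prop)

theorem isClosed_normalizer_of_isOpen {K : Subgroup G} (hK : IsOpen (K : Set G)) :
    IsClosed (normalizer (K : Set G) : Set G) :=
  isClosed_of_isOpen _ (isOpen_mono le_normalizer hK)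

theorem subset_topologicalClosure_closure (s : Set G) :
    s ⊆ (closure s).topologicalClosure :=
  subset_closure.trans (le_topologicalClosure _)

theorem topologicalClosure_closure_le {s : Set G} {F : Subgroup G}
    (hF : IsClosed (F : Set G)) (hs : s ⊆ F) : (closure s).topologicalClosure ≤ F :=
  topologicalClosure_minimal _ (closure_le F |>.2 hs) hF

end Subgroup

section SINFamily

variable {G : Type*} [Group G] [TopologicalSpace G]

theorem mem_sinFamily_of_le {A B : Subgroup G} (hAB : A ≤ B) (hA : IsClosed (A : Set G))
    (hB : B ∈ SINFamily G) : A ∈ SINFamily G := by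
  refine ⟨hA, fun V hVc hVo => ?_⟩
  obtain ⟨W, hWo, hWV, hBW⟩ := hB.2 V hVc hVo
  exact ⟨W, hWo, hWV, hAB.trans hBW⟩

theorem exists_isCompact_isOpen_le_normalizer_of_mem_sinFamily [IsTopologicalGroup G]
    {C V : Subgroup G} (hC : C ∈ SINFamily G) (hVc : IsCompact (V : Set G))
    (hVo : IsOpen (V : Set G)) :
    ∃ W : Subgroup G, IsCompact (W : Set G) ∧ IsOpen (W : Set G) ∧
      C ≤ Subgroup.normalizer (W : Set G) := by
  obtain ⟨W, hWo, hWV, hCW⟩ := hC.2 V hVc hVo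
  exact ⟨W, hVc.of_isClosed_subset (W.isClosed_of_isOpen hWo) hWV, hWo, hCW⟩

/-- `W₀.conjCore W₁` serves for `⟨W₀, C⟩` whenever `W₁` serves for `C`. -/
theorem closure_union_mem_sinFamily [IsTopologicalGroup G] {C W₀ : Subgroup G}
    (hC : C ∈ SINFamily G) (hW₀c : IsCompact (W₀ : Set G))
    (hCW₀ : C ≤ Subgroup.normalizer (W₀ : Set G)) :
    (Subgroup.closure ((W₀ : Set G) ∪ C)).topologicalClosure ∈ SINFamily G := by
  refine ⟨Subgroup.isClosed_topologicalClosure _, fun V hVc hVo => ?_⟩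
  obtain ⟨W₁, hW₁o, hW₁V, hCW₁⟩ := hC.2 V hVc hVo
  have hKo := Subgroup.isOpen_conjCore hW₀c hW₁o
  refine ⟨W₀.conjCore W₁, hKo, (Subgroup.conjCore_le W₀ W₁).trans hW₁V,
    Subgroup.topologicalClosure_closure_le (Subgroup.isClosed_normalizer_of_isOpen hKo) ?_⟩
  rintro y (hy | hy)
  · exact Subgroup.le_normalizer_conjCore W₀ W₁ hy
  · exact Subgroup.normalizer_inf_normalizer_le_normalizer_conjCore W₀ W₁ ⟨hCW₀ hy, hCW₁ hy⟩

end SINFamily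

theorem sinCore_isClosed_general (G : Type*) [Group G] [TopologicalSpace G] [IsTopologicalGroup G] :
    IsClosed (SINCore G) := by
  refine isClosed_of_closure_subset fun g hg C hC => ?_
  by_cases hG : ∃ V : Subgroup G, IsCompact (V : Set G) ∧ IsOpen (V : Set G)
  swap
  · exact ⟨Subgroup.isClosed_topologicalClosure _, fun V hVc hVo => absurd ⟨V, hVc, hVo⟩ hG⟩
  obtain ⟨V, hVc, hVo⟩ := hG
  obtain ⟨W₀, hW₀c, hW₀o, hCW₀⟩ :=
    exists_isCompact_isOpen_le_normalizer_of_mem_sinFamily hC hVc hVo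
  obtain ⟨_, ⟨w, hw, rfl⟩, hh⟩ :=
    mem_closure_iff.1 hg _ (hW₀o.smul g) ⟨1, W₀.one_mem, mul_one g⟩
  set E := (Subgroup.closure ((W₀ : Set G) ∪ C)).topologicalClosure
  have hWE : W₀ ≤ E := fun x hx => Subgroup.subset_topologicalClosure_closure _ (Or.inl hx)
  have hCE : C ≤ E := fun x hx => Subgroup.subset_topologicalClosure_closure _ (Or.inr hx)
  set F := (Subgroup.closure ({g • w} ∪ (E : Set G))).topologicalClosure
  have hEF : E ≤ F := fun x hx => Subgroup.subset_topologicalClosure_closure _ (Or.inr hx)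
  have hgwF : g • w ∈ F := Subgroup.subset_topologicalClosure_closure _ (Or.inl rfl)
  have hgF : g ∈ F := by
    simpa using F.mul_mem hgwF (F.inv_mem (hEF (hWE hw)))
  refine mem_sinFamily_of_le ?_ (Subgroup.isClosed_topologicalClosure _)
    (hh E (closure_union_mem_sinFamily hC hW₀c hCW₀))
  refine Subgroup.topologicalClosure_closure_le (Subgroup.isClosed_topologicalClosure _) ?_
  rintro y (rfl | hy)
  · exact hgF
  · exact hEF (hCE hy)

/-- In a t.d.l.c.s.c. group the SIN-core is closed. -/
theorem sinCore_isClosed (G : Type*) [Group G] [TopologicalSpace G] [IsTopologicalGroup G]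
    [LocallyCompactSpace G] [TotallyDisconnectedSpace G]
    [SecondCountableTopology G] :
    IsClosed (SINCore G) :=
  sinCore_isClosed_general G
end

section
/- Let G be a totally disconnected locally compact second countable group. Then SIN(G) is an increasing union of compactly generated relatively open subgroups each of which is a SIN group (admits a basis at 1 of compact open normal subgroups). -/
/-!
Adjoining a compact open subgroup `W` to a SIN-set `S` normalizing it gives again a SIN-set:
inside `V ∩ W` choose an open `Z` normalized by `S`; the intersection of the `W`-conjugates of
`Z` is open by compactness of `W` and is normalized by `S` and `W`. Consequently the SIN-core
`N` is a closed subgroup, since a limit point of `N` is an element of `N` times an element of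
such a `W`.

Fix a compact open subgroup `U` (van Dantzig) and a sequence `aₙ` in `N` meeting every coset
`gU` with `g ∈ N`. The subgroups `Hᵢ = ⟨a₀, …, aᵢ, N ∩ U⟩` exhaust `N`, are generated by a
compact set, and contain the relatively open subgroup `N ∩ U`, so they are relatively open and
closed. Each `Hᵢ` lies in the group generated by the SIN-set `{a₀, …, aᵢ} ∪ U`, so it normalizes
arbitrarily small open subgroups `Z`, and the subgroups `Hᵢ ∩ Z` witness that `Hᵢ` is SIN.
-/

open Set Pointwise

namespace Subgroup

variable {G : Type*} [Group G]

/-- The largest subgroup of `Z` normalized by `W`; for `W = ⊤` this is `Subgroup.normalCore Z`. -/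
def relNormalCore (W Z : Subgroup G) : Subgroup G where
  carrier := {g | ∀ x ∈ W, x * g * x⁻¹ ∈ Z}
  one_mem' _ _ := by simp
  mul_mem' ha hb x hx := by simpa [mul_assoc] using Z.mul_mem (ha x hx) (hb x hx)
  inv_mem' ha x hx := by simpa [mul_assoc] using Z.inv_mem (ha x hx)

theorem relNormalCore_le (W Z : Subgroup G) : relNormalCore W Z ≤ Z := fun g hg => by
  simpa using hg 1 W.one_mem

theorem le_normalizer_relNormalCore (W Z : Subgroup G) :
    W ≤ normalizer (relNormalCore W Z : Set G) :=
  le_normalizer_iff.2 fun w hw y hy x hx => by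
    simpa [mul_assoc] using hy (x * w) (W.mul_mem hx hw)

theorem normalizer_inf_normalizer_le_normalizer_relNormalCore (W Z : Subgroup G) :
    normalizer (W : Set G) ⊓ normalizer (Z : Set G) ≤ normalizer (relNormalCore W Z : Set G) :=
  le_normalizer_iff.2 fun c hc y hy x hx => by
    have hx' : c⁻¹ * x * c ∈ W := (mem_normalizer_iff''.1 hc.1 x).1 hx
    simpa [mul_assoc] using (mem_normalizer_iff.1 hc.2 _).1 (hy _ hx')

theorem isOpen_relNormalCore [TopologicalSpace G] [IsTopologicalGroup G] {W Z : Subgroup G}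
    (hW : IsCompact (W : Set G)) (hZ : IsOpen (Z : Set G)) :
    IsOpen (relNormalCore W Z : Set G) := by
  refine isOpen_of_mem_nhds _ (g := 1) (hW.eventually_forall_of_forall_eventually fun x _ => ?_)
  have hcont : Continuous fun p : G × G => p.2 * p.1 * p.2⁻¹ := by fun_prop
  exact hcont.continuousAt.preimage_mem_nhds (hZ.mem_nhds (by simp))

end Subgroup

section VanDantzig

variable {G : Type*} [Group G] [TopologicalSpace G] [IsTopologicalGroup G]

theorem exists_compactOpenSubgroup_subset [LocallyCompactSpace G] [TotallyDisconnectedSpace G]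
    {O : Set G} (hO : IsOpen O) (h1 : 1 ∈ O) :
    ∃ V : Subgroup G, IsCompact (V : Set G) ∧ IsOpen (V : Set G) ∧ (V : Set G) ⊆ O := by
  have : T2Space G := IsTopologicalGroup.t2Space_iff_one_closed.2 isClosed_singleton
  obtain ⟨s, hsc, hs1, hsO⟩ := exists_compact_subset hO h1
  obtain ⟨K, hK, hK1, hKs⟩ :=
    loc_compact_Haus_tot_disc_of_zero_dim.mem_nhds_iff.1 (isOpen_interior.mem_nhds hs1)
  have hKc : IsCompact K := hsc.of_isClosed_subset hK.1 (hKs.trans interior_subset)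
  obtain ⟨B, hB, hKB⟩ := compact_open_separated_mul_right hKc hK.2 subset_rfl
  set V := Subgroup.closure (B ∩ B⁻¹)
  have hVK : ∀ x ∈ V, ∀ k ∈ K, k * x ∈ K := by
    intro x hx
    induction hx using Subgroup.closure_induction'' with
    | mem x hx => exact fun k hk => hKB (mul_mem_mul hk hx.1)
    | inv_mem x hx => exact fun k hk => hKB (mul_mem_mul hk hx.2)
    | one => simp
    | mul x y _ _ hx hy => exact fun k hk => by simpa [mul_assoc] using hy _ (hx k hk)
  have hVK' : (V : Set G) ⊆ K := fun x hx => by simpa using hVK x hx 1 hK1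
  have hVo : IsOpen (V : Set G) := V.isOpen_of_mem_nhds (Filter.mem_of_superset
    (Filter.inter_mem hB (inv_mem_nhds_one G hB)) Subgroup.subset_closure)
  exact ⟨V, hKc.of_isClosed_subset (V.isClosed_of_isOpen hVo) hVK', hVo,
    hVK'.trans (hKs.trans (interior_subset.trans hsO))⟩

end VanDantzig

section SINCore

variable {G : Type*} [Group G] [TopologicalSpace G]

variable (G) in
def IsSINSet (S : Set G) : Prop :=
  ∀ V : Subgroup G, IsCompact (V : Set G) → IsOpen (V : Set G) →
    ∃ W : Subgroup G, IsOpen (W : Set G) ∧ W ≤ V ∧ S ⊆ Subgroup.normalizer (W : Set G)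

theorem mem_SINFamily_iff {C : Subgroup G} :
    C ∈ SINFamily G ↔ IsClosed (C : Set G) ∧ IsSINSet G C :=
  Iff.rfl

theorem IsSINSet.mono {S T : Set G} (hST : S ⊆ T) (hT : IsSINSet G T) : IsSINSet G S :=
  fun V hVc hVo => (hT V hVc hVo).imp fun _ ⟨hWo, hWV, hTW⟩ => ⟨hWo, hWV, hST.trans hTW⟩

variable [IsTopologicalGroup G]

theorem IsSINSet.topologicalClosure_closure {S : Set G} (hS : IsSINSet G S) :
    IsSINSet G (Subgroup.closure S).topologicalClosure := by
  intro V hVc hVo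
  obtain ⟨W, hWo, hWV, hSW⟩ := hS V hVc hVo
  have hNo : IsOpen (Subgroup.normalizer (W : Set G) : Set G) :=
    Subgroup.isOpen_mono Subgroup.le_normalizer hWo
  exact ⟨W, hWo, hWV, Subgroup.topologicalClosure_minimal _ ((Subgroup.closure_le _).2 hSW)
    (Subgroup.isClosed_of_isOpen _ hNo)⟩

theorem subset_topologicalClosure_closure (S : Set G) :
    S ⊆ (Subgroup.closure S).topologicalClosure :=
  Subgroup.subset_closure.trans (Subgroup.le_topologicalClosure _)

theorem IsSINSet.of_subset_closure {S T : Set G} (hS : IsSINSet G S)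
    (hTS : T ⊆ Subgroup.closure S) : IsSINSet G T :=
  hS.topologicalClosure_closure.mono (hTS.trans (Subgroup.le_topologicalClosure _))

theorem mem_SINCore_iff {g : G} :
    g ∈ SINCore G ↔ ∀ S : Set G, IsSINSet G S → IsSINSet G (insert g S) := by
  refine ⟨fun hg S hS => ?_, fun hg C hC => ?_⟩
  · have hC := hg _ ⟨Subgroup.isClosed_topologicalClosure _, hS.topologicalClosure_closure⟩
    exact (mem_SINFamily_iff.1 hC).2.mono ((insert_subset_insert
      (subset_topologicalClosure_closure S)).trans (subset_topologicalClosure_closure _))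
  · exact ⟨Subgroup.isClosed_topologicalClosure _,
      (hg _ (mem_SINFamily_iff.1 hC).2).topologicalClosure_closure⟩


theorem IsSINSet.union_compactOpenSubgroup {S : Set G} (hS : IsSINSet G S) {W : Subgroup G}
    (hWc : IsCompact (W : Set G)) (hWo : IsOpen (W : Set G))
    (hSW : S ⊆ Subgroup.normalizer (W : Set G)) : IsSINSet G (S ∪ W) := by
  intro V hVc hVo
  obtain ⟨Z, hZo, hZVW, hSZ⟩ := hS (V ⊓ W)
    (hVc.inter_right (W.isClosed_of_isOpen hWo)) (hVo.inter hWo)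
  refine ⟨W.relNormalCore Z, Subgroup.isOpen_relNormalCore hWc hZo,
    (W.relNormalCore_le Z).trans (hZVW.trans inf_le_left),
    union_subset (fun c hc => ?_) (W.le_normalizer_relNormalCore Z)⟩
  exact W.normalizer_inf_normalizer_le_normalizer_relNormalCore Z ⟨hSW hc, hSZ hc⟩

theorem isSINSet_compactOpenSubgroup {W : Subgroup G} (hWc : IsCompact (W : Set G))
    (hWo : IsOpen (W : Set G)) : IsSINSet G W := by
  have hempty : IsSINSet G ∅ := fun V _ hVo => ⟨V, hVo, le_rfl, empty_subset _⟩
  simpa using hempty.union_compactOpenSubgroup hWc hWo (empty_subset _)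

theorem IsSINSet.union_of_finite_subset_SINCore {S F : Set G} (hS : IsSINSet G S)
    (hF : F.Finite) (hFN : F ⊆ SINCore G) : IsSINSet G (F ∪ S) := by
  induction F, hF using Set.Finite.induction_on with
  | empty => simpa using hS
  | @insert g F _ _ ih =>
    rw [insert_union]
    exact mem_SINCore_iff.1 (hFN (mem_insert g F)) _ (ih ((subset_insert g F).trans hFN))

variable (G) in
def sinCoreSubgroup : Subgroup G where
  carrier := SINCore G
  one_mem' := mem_SINCore_iff.2 fun _ hS =>
    hS.of_subset_closure (insert_subset (one_mem _) Subgroup.subset_closure)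
  mul_mem' hg hh := mem_SINCore_iff.2 fun S hS =>
    (mem_SINCore_iff.1 hg _ (mem_SINCore_iff.1 hh S hS)).of_subset_closure <| insert_subset
      (mul_mem (Subgroup.subset_closure (mem_insert _ _))
        (Subgroup.subset_closure (mem_insert_of_mem _ (mem_insert _ _))))
      ((subset_insert _ _).trans (subset_insert _ _) |>.trans Subgroup.subset_closure)
  inv_mem' hg := mem_SINCore_iff.2 fun S hS =>
    (mem_SINCore_iff.1 hg S hS).of_subset_closure <| insert_subset
      (inv_mem (Subgroup.subset_closure (mem_insert _ _)))
      ((subset_insert _ _).trans Subgroup.subset_closure)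

theorem isClosed_SINCore : IsClosed (SINCore G) := by
  refine closure_subset_iff_isClosed.1 fun u hu => mem_SINCore_iff.2 fun S hS V hVc hVo => ?_
  obtain ⟨W, hWo, hWV, hSW⟩ := hS V hVc hVo
  have hWc : IsCompact (W : Set G) := hVc.of_isClosed_subset (W.isClosed_of_isOpen hWo) hWV
  obtain ⟨a, haW, ha⟩ := mem_closure_iff.1 hu {x | u⁻¹ * x ∈ W}
    (hWo.preimage (continuous_const_mul u⁻¹)) (by simp)
  have hSWa := mem_SINCore_iff.1 ha _ (hS.union_compactOpenSubgroup hWc hWo hSW)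
  refine hSWa.of_subset_closure (insert_subset ?_ ?_) V hVc hVo
  · have hau : a * (u⁻¹ * a)⁻¹ = u := by group
    exact hau ▸ mul_mem (Subgroup.subset_closure (mem_insert _ _))
      (inv_mem (Subgroup.subset_closure (mem_insert_of_mem _ (Or.inr haW))))
  · exact fun x hx => Subgroup.subset_closure (mem_insert_of_mem _ (Or.inl hx))

end SINCore

section RelativelyOpen

variable {G : Type*} [Group G] [TopologicalSpace G] [ContinuousMul G]
  {H N U : Subgroup G}

theorem Subgroup.exists_isOpen_eq_inter_of_inf_le (hU : IsOpen (U : Set G)) (hHN : H ≤ N)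
    (hNU : N ⊓ U ≤ H) : ∃ O : Set G, IsOpen O ∧ (H : Set G) = O ∩ N := by
  refine ⟨H * U, hU.mul_left, Subset.antisymm (fun h hh => ⟨⟨h, hh, 1, U.one_mem, mul_one h⟩,
    hHN hh⟩) ?_⟩
  rintro _ ⟨⟨h, hh, u, hu, rfl⟩, hhu⟩
  have huN : u ∈ N := by simpa using N.mul_mem (N.inv_mem (hHN hh)) hhu
  exact H.mul_mem hh (hNU ⟨huN, hu⟩)

theorem Subgroup.isClosed_of_inf_le (hN : IsClosed (N : Set G)) (hU : IsOpen (U : Set G))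
    (hHN : H ≤ N) (hNU : N ⊓ U ≤ H) : IsClosed (H : Set G) := by
  refine closure_subset_iff_isClosed.1 fun x hx => ?_
  have hxN : x ∈ N := closure_minimal hHN hN hx
  obtain ⟨h, hhU, hh⟩ := mem_closure_iff.1 hx {y | x⁻¹ * y ∈ U}
    (hU.preimage (continuous_const_mul x⁻¹)) (by simp)
  have hxh : x⁻¹ * h ∈ H := hNU ⟨N.mul_mem (N.inv_mem hxN) (hHN hh), hhU⟩
  simpa using H.mul_mem hh (H.inv_mem hxh)

end RelativelyOpen

section SINGroup

variable {G : Type*} [Group G] [TopologicalSpace G] [IsTopologicalGroup G]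

/-- `H`, with the subspace topology, has a basis at `1` of compact open normal subgroups. -/
def Subgroup.IsSIN (H : Subgroup G) : Prop :=
  ∀ O : Set G, IsOpen O → (1 : G) ∈ O →
    ∃ K : Subgroup G, K ≤ H ∧ IsCompact (K : Set G) ∧
      (∃ O' : Set G, IsOpen O' ∧ (K : Set G) = O' ∩ (H : Set G)) ∧
      H ≤ Subgroup.normalizer (K : Set G) ∧ (K : Set G) ⊆ O

theorem Subgroup.isSIN_of_mem_SINFamily [LocallyCompactSpace G] [TotallyDisconnectedSpace G]
    {H : Subgroup G} (hH : H ∈ SINFamily G) : H.IsSIN := by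
  intro O hO h1
  obtain ⟨V, hVc, hVo, hVO⟩ := exists_compactOpenSubgroup_subset hO h1
  obtain ⟨Z, hZo, hZV, hHZ⟩ := hH.2 V hVc hVo
  refine ⟨H ⊓ Z, inf_le_left,
    hVc.of_isClosed_subset (hH.1.inter (Z.isClosed_of_isOpen hZo)) fun x hx => hZV hx.2,
    ⟨Z, hZo, inter_comm _ _⟩, ?_, fun x hx => hVO (hZV hx.2)⟩
  exact (le_inf le_normalizer hHZ).trans inf_normalizer_le_normalizer_inf

end SINGroup

theorem Subgroup.exists_seq_forall_exists_inv_mul_mem {G : Type*} [Group G] [TopologicalSpace G]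
    [ContinuousMul G] [SecondCountableTopology G] (N : Subgroup G) {U : Set G}
    (hU : IsOpen U) (h1 : (1 : G) ∈ U) :
    ∃ a : ℕ → G, (∀ n, a n ∈ N) ∧ ∀ g ∈ N, ∃ n, g⁻¹ * a n ∈ U := by
  set a := TopologicalSpace.denseSeq (N : Set G)
  refine ⟨fun n => a n, fun n => (a n).2, fun g hg => ?_⟩
  exact (TopologicalSpace.denseRange_denseSeq (N : Set G)).exists_mem_open
    (hU.preimage ((continuous_const_mul g⁻¹).comp continuous_subtype_val)) ⟨⟨g, hg⟩, by simpa⟩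

/-- The SIN-core of a t.d.l.c.s.c. group is an increasing union of compactly generated
relatively open subgroups each of which is a SIN group. -/
theorem sinCore_union_of_cg_open_SIN (G : Type*) [Group G] [TopologicalSpace G]
    [IsTopologicalGroup G] [LocallyCompactSpace G] [TotallyDisconnectedSpace G]
    [SecondCountableTopology G] :
    ∃ H : ℕ → Subgroup G,
      Monotone H ∧
      (⋃ i, (H i : Set G)) = SINCore G ∧
      ∀ i : ℕ,
        -- compactly generated
        (∃ K : Set G, IsCompact K ∧ Subgroup.closure K = H i) ∧
        -- relatively open in the SIN-core
        (∃ O : Set G, IsOpen O ∧ (H i : Set G) = O ∩ SINCore G) ∧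
        -- a SIN group: every neighbourhood of 1 contains a compact relatively open
        -- subgroup normal in `H i`
        (∀ O : Set G, IsOpen O → (1 : G) ∈ O →
          ∃ K : Subgroup G, K ≤ H i ∧ IsCompact (K : Set G) ∧
            (∃ O' : Set G, IsOpen O' ∧ (K : Set G) = O' ∩ (H i : Set G)) ∧
            H i ≤ Subgroup.normalizer (K : Set G) ∧ (K : Set G) ⊆ O) := by
  obtain ⟨U, hUc, hUo, -⟩ := exists_compactOpenSubgroup_subset isOpen_univ (mem_univ (1 : G))
  set N := sinCoreSubgroup G
  obtain ⟨a, haN, ha⟩ := N.exists_seq_forall_exists_inv_mul_mem hUo U.one_mem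
  set H : ℕ → Subgroup G := fun i => Subgroup.closure (a '' Iic i ∪ (N ⊓ U : Subgroup G))
  have hmono : Monotone H := fun i j hij =>
    Subgroup.closure_mono (union_subset_union_left _ (image_mono (Iic_subset_Iic.2 hij)))
  have hHN i : H i ≤ N := (Subgroup.closure_le _).2 <|
    union_subset (image_subset_iff.2 fun n _ => haN n) fun _ hx => hx.1
  have hNUH i : N ⊓ U ≤ H i := fun _ hx => Subgroup.subset_closure (Or.inr hx)
  have hcover : SINCore G ⊆ ⋃ i, (H i : Set G) := fun g hg => by
    obtain ⟨n, hn⟩ := ha g hg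
    have hgn : a n * (g⁻¹ * a n)⁻¹ = g := by group
    have han : a n ∈ H n := Subgroup.subset_closure (Or.inl ⟨n, mem_Iic.2 le_rfl, rfl⟩)
    exact mem_iUnion.2 ⟨n, hgn ▸ mul_mem han
      (inv_mem (hNUH n ⟨N.mul_mem (N.inv_mem hg) (haN n), hn⟩))⟩
  have hH i : H i ∈ SINFamily G := by
    refine ⟨(H i).isClosed_of_inf_le isClosed_SINCore hUo (hHN i) (hNUH i), ?_⟩
    refine ((isSINSet_compactOpenSubgroup hUc hUo).union_of_finite_subset_SINCore
      ((finite_Iic i).image a) (image_subset_iff.2 fun n _ => haN n)).of_subset_closure ?_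
    exact Subgroup.closure_mono (union_subset_union_right _ fun _ hx => hx.2)
  refine ⟨H, hmono, Subset.antisymm (iUnion_subset hHN) hcover, fun i => ⟨?_,
    (H i).exists_isOpen_eq_inter_of_inf_le hUo (hHN i) (hNUH i),
    Subgroup.isSIN_of_mem_SINFamily (hH i)⟩⟩
  exact ⟨_, ((finite_Iic i).image a).isCompact.union (hUc.inter_left isClosed_SINCore), rfl⟩
end

section
/- Let G be a compactly generated totally disconnected locally compact second countable group and let 𝒩 be a filtering family of closed normal subgroups of G with trivial intersection. Then some member N ∈ 𝒩 contains a compact normal subgroup K of N with N/K discrete (i.e., some member of 𝒩 is compact-by-discrete). -/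
/-!
Take a compact open subgroup `V` (van Dantzig) and a finite set `t` such that `V ∪ t`
generates `G`. A subgroup `N ∩ V` with `N` normal is normalised by `V`, and it is normalised by
each `g ∈ t` as soon as it lies in the open neighbourhood
`W = ⋂_{g ∈ t} (g⁻¹ V g ∩ g V g⁻¹)` of `1`; it is then normal in `G`. Since the members of the
family are closed, form a directed family and intersect in `{1} ⊆ W`, compactness of `V` yields
a member `N` with `N ∩ V ⊆ W`, and `K = N ∩ V` is compact, open in `N` and normal.
-/

open Set Topology

theorem IsCompact.exists_inter_subset_of_directed_closed {X ι : Type*} [TopologicalSpace X]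
    [Nonempty ι] {C U : Set X} (hC : IsCompact C) (hU : IsOpen U) (F : ι → Set X)
    (hF : ∀ i, IsClosed (F i)) (hdir : Directed (· ⊇ ·) F) (hFU : ⋂ i, F i ⊆ U) :
    ∃ i, C ∩ F i ⊆ U := by
  obtain ⟨i, hi⟩ := (hC.diff hU).elim_directed_family_closed F hF
    (eq_empty_of_forall_notMem fun _ hx => hx.1.2 (hFU hx.2)) hdir
  exact ⟨i, fun x hx => by_contra fun hxU => hi.subset ⟨⟨hx.1, hxU⟩, hx.2⟩⟩

theorem Subgroup.normal_of_forall_conj_mem_of_closure_eq_top {G : Type*} [Group G]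
    {K : Subgroup G} {S : Set G} (hS : Subgroup.closure S = ⊤)
    (hconj : ∀ s ∈ S, ∀ k ∈ K, s * k * s⁻¹ ∈ K ∧ s⁻¹ * k * s ∈ K) : K.Normal := by
  refine Subgroup.normalizer_eq_top_iff.1 (eq_top_iff.2 ?_)
  rw [← hS, Subgroup.closure_le]
  intro s hs k
  refine ⟨fun hk => (hconj s hs k hk).1, fun hk => ?_⟩
  simpa [mul_assoc] using (hconj s hs _ hk).2

section TopologicalGroup

variable {G : Type*} [Group G] [TopologicalSpace G] [IsTopologicalGroup G]

theorem exists_openSubgroup_subset_of_isCompact_of_isOpen {C : Set G} (hCc : IsCompact C)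
    (hCo : IsOpen C) (h1 : (1 : G) ∈ C) : ∃ V : OpenSubgroup G, (V : Set G) ⊆ C := by
  obtain ⟨U, hU, hCU⟩ := compact_open_separated_mul_right hCc hCo subset_rfl
  have hsymm : U ∩ U⁻¹ ∈ 𝓝 (1 : G) := Filter.inter_mem hU (inv_mem_nhds_one G hU)
  let H := Subgroup.closure (U ∩ U⁻¹)
  have hHopen : IsOpen (H : Set G) :=
    H.isOpen_of_mem_nhds (Filter.mem_of_superset hsymm Subgroup.subset_closure)
  refine ⟨⟨H, hHopen⟩, fun g hg => ?_⟩
  -- right multiplication by an element of `H` maps `C` into itself, since `C * U ⊆ C`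
  have hstable : ∀ c ∈ C, c * g ∈ C := by
    induction hg using Subgroup.closure_induction'' with
    | mem x hx => exact fun c hc => hCU (mul_mem_mul hc hx.1)
    | inv_mem x hx => exact fun c hc => hCU (mul_mem_mul hc hx.2)
    | one => simp
    | mul x y _ _ hx hy => exact fun c hc => mul_assoc c x y ▸ hy _ (hx c hc)
  simpa using hstable 1 h1

/-- Van Dantzig's theorem. -/
theorem exists_openSubgroup_isCompact [LocallyCompactSpace G] [TotallyDisconnectedSpace G] :
    ∃ V : OpenSubgroup G, IsCompact (V : Set G) := by
  obtain ⟨K, hKc, hK1⟩ := exists_compact_mem_nhds (1 : G)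
  obtain ⟨C, hCclopen, hC1, hCK⟩ := loc_compact_Haus_tot_disc_of_zero_dim.mem_nhds_iff.1 hK1
  have hCc : IsCompact C := hKc.of_isClosed_subset hCclopen.1 hCK
  obtain ⟨V, hVC⟩ := exists_openSubgroup_subset_of_isCompact_of_isOpen hCc hCclopen.2 hC1
  exact ⟨V, hCc.of_isClosed_subset V.isClosed hVC⟩

theorem OpenSubgroup.exists_finset_closure_union_eq_top (V : OpenSubgroup G) {X : Set G}
    (hX : IsCompact X) (hXgen : Subgroup.closure X = ⊤) :
    ∃ t : Finset G, Subgroup.closure ((V : Set G) ∪ t) = ⊤ := by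
  obtain ⟨t, ht⟩ := compact_covered_by_mul_left_translates hX
    ⟨1, by rw [V.isOpen.interior_eq]; exact V.one_mem⟩
  refine ⟨t, eq_top_iff.2 (hXgen ▸ Subgroup.closure_le _ |>.2 fun x hx => ?_)⟩
  obtain ⟨g, hgt, hgx⟩ := mem_iUnion₂.1 (ht hx)
  have hg : g ∈ Subgroup.closure ((V : Set G) ∪ t) := Subgroup.subset_closure (Or.inr hgt)
  have hgx' : g * x ∈ Subgroup.closure ((V : Set G) ∪ t) := Subgroup.subset_closure (Or.inl hgx)
  simpa using mul_mem (inv_mem hg) hgx'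

theorem OpenSubgroup.exists_isOpen_forall_inf_normal (V : OpenSubgroup G) {X : Set G}
    (hX : IsCompact X) (hXgen : Subgroup.closure X = ⊤) :
    ∃ W : Set G, IsOpen W ∧ (1 : G) ∈ W ∧
      ∀ N : Subgroup G, N.Normal → ((N ⊓ V : Subgroup G) : Set G) ⊆ W → (N ⊓ V).Normal := by
  obtain ⟨t, ht⟩ := V.exists_finset_closure_union_eq_top hX hXgen
  refine ⟨⋂ g ∈ t, (fun x => g * x * g⁻¹) ⁻¹' V ∩ (fun x => g⁻¹ * x * g) ⁻¹' V, ?_, ?_, ?_⟩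
  · exact isOpen_biInter_finset fun g _ =>
      (V.isOpen.preimage (by fun_prop)).inter (V.isOpen.preimage (by fun_prop))
  · simp
  intro N hN hNW
  refine Subgroup.normal_of_forall_conj_mem_of_closure_eq_top ht fun s hs k hk => ?_
  obtain ⟨hkN, hkV⟩ := Subgroup.mem_inf.1 hk
  suffices hconjV : s * k * s⁻¹ ∈ V ∧ s⁻¹ * k * s ∈ V from
    ⟨Subgroup.mem_inf.2 ⟨hN.conj_mem k hkN s, hconjV.1⟩,
      Subgroup.mem_inf.2 ⟨by simpa using hN.conj_mem k hkN s⁻¹, hconjV.2⟩⟩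
  rcases hs with hsV | hst
  · replace hsV : s ∈ V := hsV
    exact ⟨mul_mem (mul_mem hsV hkV) (inv_mem hsV), mul_mem (mul_mem (inv_mem hsV) hkV) hsV⟩
  · exact mem_iInter₂.1 (hNW hk) s hst

end TopologicalGroup

theorem filtering_family_compact_by_discrete_general (G : Type*) [Group G] [TopologicalSpace G]
    [IsTopologicalGroup G] [LocallyCompactSpace G] [TotallyDisconnectedSpace G]
    (hcg : ∃ X : Set G, IsCompact X ∧ Subgroup.closure X = ⊤)
    (𝒩 : Set (Subgroup G)) (hne : 𝒩.Nonempty)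
    (hclosed : ∀ N ∈ 𝒩, IsClosed (N : Set G))
    (hnormal : ∀ N ∈ 𝒩, N.Normal)
    (hfilter : ∀ N ∈ 𝒩, ∀ M ∈ 𝒩, ∃ K ∈ 𝒩, K ≤ N ⊓ M)
    (htriv : ⋂ N ∈ 𝒩, (N : Set G) = {1}) :
    ∃ N ∈ 𝒩, ∃ K : Subgroup G, K ≤ N ∧ IsCompact (K : Set G) ∧
      (∀ n ∈ N, ∀ k ∈ K, n * k * n⁻¹ ∈ K) ∧
      -- the quotient N/K is discrete, i.e. K is relatively open in N
      (∃ O : Set G, IsOpen O ∧ (K : Set G) = O ∩ (N : Set G)) := by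
  obtain ⟨X, hX, hXgen⟩ := hcg
  obtain ⟨V, hVc⟩ := exists_openSubgroup_isCompact (G := G)
  obtain ⟨W, hWo, hW1, hW⟩ := V.exists_isOpen_forall_inf_normal hX hXgen
  have : Nonempty 𝒩 := hne.to_subtype
  have hdir : Directed (· ⊇ ·) fun N : 𝒩 => (N : Set G) := fun N M =>
    let ⟨K, hK, hKle⟩ := hfilter N N.2 M M.2
    ⟨⟨K, hK⟩, fun _ hx => (hKle hx).1, fun _ hx => (hKle hx).2⟩
  have hinter : ⋂ N : 𝒩, (N : Set G) ⊆ W := fun x hx => by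
    have hx1 : x ∈ ⋂ N ∈ 𝒩, (N : Set G) := mem_iInter₂.2 fun N hN => mem_iInter.1 hx ⟨N, hN⟩
    rw [htriv, mem_singleton_iff] at hx1
    exact hx1 ▸ hW1
  obtain ⟨⟨N, hN⟩, hNW⟩ := hVc.exists_inter_subset_of_directed_closed hWo
    (fun N : 𝒩 => (N : Set G)) (fun N => hclosed N N.2) hdir hinter
  have hK := hW N (hnormal N hN) (by rw [Subgroup.coe_inf, inter_comm]; exact hNW)
  refine ⟨N, hN, N ⊓ V, inf_le_left, ?_, fun n _ k hk => hK.conj_mem k hk n, V, V.isOpen, ?_⟩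
  · exact hVc.of_isClosed_subset ((hclosed N hN).inter V.isClosed) inter_subset_right
  · rw [Subgroup.coe_inf, inter_comm]; rfl

/-- In a compactly generated t.d.l.c.s.c. group, a filtering family of closed normal
subgroups with trivial intersection contains a compact-by-discrete member. -/
theorem filtering_family_compact_by_discrete (G : Type*) [Group G] [TopologicalSpace G]
    [IsTopologicalGroup G] [LocallyCompactSpace G] [TotallyDisconnectedSpace G]
    [SecondCountableTopology G]
    (hcg : ∃ X : Set G, IsCompact X ∧ Subgroup.closure X = ⊤)
    (𝒩 : Set (Subgroup G)) (hne : 𝒩.Nonempty)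
    (hclosed : ∀ N ∈ 𝒩, IsClosed (N : Set G))
    (hnormal : ∀ N ∈ 𝒩, N.Normal)
    (hfilter : ∀ N ∈ 𝒩, ∀ M ∈ 𝒩, ∃ K ∈ 𝒩, K ≤ N ⊓ M)
    (htriv : ⋂ N ∈ 𝒩, (N : Set G) = {1}) :
    ∃ N ∈ 𝒩, ∃ K : Subgroup G, K ≤ N ∧ IsCompact (K : Set G) ∧
      (∀ n ∈ N, ∀ k ∈ K, n * k * n⁻¹ ∈ K) ∧
      -- the quotient N/K is discrete, i.e. K is relatively open in N
      (∃ O : Set G, IsOpen O ∧ (K : Set G) = O ∩ (N : Set G)) :=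
  filtering_family_compact_by_discrete_general G hcg 𝒩 hne hclosed hnormal hfilter htriv
end

section
/- Let G be a compactly generated totally disconnected locally compact second countable group and let N be a closed cocompact normal subgroup of G that is a SIN group. Then G is a SIN group. -/
/-!
Pick a compact set `C` of representatives of `G ⧸ N`. Every conjugation in `G` is a
conjugation by an element of `N` followed by one by an element of `C`, and conjugation is
uniformly continuous over the compact set `C`; hence the normal core in `G` of an
`N`-invariant subgroup that is open (resp. open in `N`) is again open (resp. open in `N`).
Start from a compact open subgroup `U ⊆ O` (van Dantzig) and a compact `N`-invariant `K ⊆ U`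
open in `N`; its normal core `M` in `G` is still open in `N`. By Schreier's lemma `N` is
compactly generated, so the discrete group `N ⧸ M` is finitely generated and the preimage `Z`
of its centralizer in `G ⧸ M` is open. Then `U ⊓ Z` is a compact open subgroup normalized by
`N`, and its normal core in `G` is the required subgroup.
-/

open Set Filter Topology
open scoped Pointwise

section Algebra

variable {G : Type*} [Group G]

theorem QuotientGroup.commute_mk_iff {M : Subgroup G} [M.Normal] {a b : G} :
    Commute (a : G ⧸ M) b ↔ a * b * a⁻¹ * b⁻¹ ∈ M := by
  rw [Commute, SemiconjBy, ← QuotientGroup.mk_mul, ← QuotientGroup.mk_mul,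
    QuotientGroup.eq_iff_div_mem, div_eq_mul_inv, mul_inv_rev, ← mul_assoc]

theorem Subgroup.mem_normalCore_of_forall_conj_mem {N K : Subgroup G} [hN : N.Normal]
    {C : Set G} (hC : ∀ g : G, ∃ c ∈ C, c⁻¹ * g ∈ N)
    (hK : ∀ n ∈ N, ∀ k ∈ K, n * k * n⁻¹ ∈ K)
    {x : G} (hx : ∀ c ∈ C, c * x * c⁻¹ ∈ K) : x ∈ K.normalCore := by
  intro g
  obtain ⟨c, hc, hn⟩ := hC g
  have hg : g * x * g⁻¹ =
      (c * (c⁻¹ * g) * c⁻¹) * (c * x * c⁻¹) * (c * (c⁻¹ * g) * c⁻¹)⁻¹ := by group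
  rw [hg]
  exact hK _ (hN.conj_mem _ hn c) _ (hx c hc)

/-- Schreier's lemma for a subgroup `N` whose cosets have representatives in `C`. -/
theorem Subgroup.le_closure_inter_of_closure_eq_top {N : Subgroup G} {X C : Set G}
    (hX : closure X = ⊤) (hC : ∀ g : G, ∃ c ∈ C, c⁻¹ * g ∈ N) :
    N ≤ closure ((C⁻¹ * (X ∪ X⁻¹) * C ∪ C) ∩ N) := by
  set H := closure ((C⁻¹ * (X ∪ X⁻¹) * C ∪ C) ∩ N)
  have hHN : H ≤ N := (closure_le N).2 inter_subset_right
  have mem_H_of_mem_C {c : G} (hc : c ∈ C) (hcN : c ∈ N) : c ∈ H :=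
    subset_closure ⟨Or.inr hc, hcN⟩
  have step {x : G} (hx : x ∈ X ∪ X⁻¹) {y : G} :
      (∃ c ∈ C, c⁻¹ * y ∈ H) → ∃ c ∈ C, c⁻¹ * (x * y) ∈ H := by
    rintro ⟨c, hc, hy⟩
    obtain ⟨c', hc', hn⟩ := hC (x * c)
    have hxy : c'⁻¹ * (x * y) = c'⁻¹ * (x * c) * (c⁻¹ * y) := by group
    have hmem : c'⁻¹ * (x * c) ∈ C⁻¹ * (X ∪ X⁻¹) * C := by
      rw [← mul_assoc]
      exact Set.mul_mem_mul (Set.mul_mem_mul (inv_mem_inv.2 hc') hx) hc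
    refine ⟨c', hc', ?_⟩
    rw [hxy]
    exact mul_mem (subset_closure ⟨Or.inl hmem, hn⟩) hy
  have coset (g : G) : ∃ c ∈ C, c⁻¹ * g ∈ H := by
    induction (hX ▸ mem_top g : g ∈ closure X) using closure_induction_left with
    | one =>
      obtain ⟨c, hc, hcN⟩ := hC 1
      simp only [mul_one] at hcN ⊢
      exact ⟨c, hc, inv_mem (mem_H_of_mem_C hc (by simpa using hcN))⟩
    | mul_left x hx y _ ih => exact step (Or.inl hx) ih
    | inv_mul_cancel x hx y _ ih => exact step (Or.inr (inv_mem_inv.2 hx)) ih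
  intro n hn
  obtain ⟨c, hc, hcn⟩ := coset n
  have hcN : c ∈ N := by simpa using mul_mem hn (inv_mem (hHN hcn))
  simpa using mul_mem (mem_H_of_mem_C hc hcN) hcn

def Subgroup.centralizerModulo (N M : Subgroup G) [M.Normal] : Subgroup G :=
  (centralizer (N.map (QuotientGroup.mk' M) : Set (G ⧸ M))).comap (QuotientGroup.mk' M)

theorem Subgroup.mem_centralizerModulo_iff {N M : Subgroup G} [M.Normal] {g : G} :
    g ∈ N.centralizerModulo M ↔ ∀ n ∈ N, g * n * g⁻¹ * n⁻¹ ∈ M := by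
  simp only [centralizerModulo, mem_comap, mem_centralizer_iff, SetLike.mem_coe, mem_map,
    forall_exists_index, and_imp, forall_apply_eq_imp_iff₂, QuotientGroup.mk'_apply,
    ← QuotientGroup.commute_mk_iff]
  exact forall₂_congr fun n _ => ⟨fun h => h.symm, fun h => h.symm⟩

theorem Subgroup.conj_mem_inf_centralizerModulo {N M U : Subgroup G} [hM : M.Normal]
    (hMU : M ≤ U) {n v : G} (hn : n ∈ N) (hv : v ∈ U ⊓ N.centralizerModulo M) :
    n * v * n⁻¹ ∈ U ⊓ N.centralizerModulo M := by
  have hMZ : M ≤ U ⊓ N.centralizerModulo M := le_inf hMU fun m hm =>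
    mem_centralizerModulo_iff.2 fun k _ => by
      simpa only [mul_assoc] using mul_mem hm (hM.conj_mem _ (inv_mem hm) k)
  have hconj : n * v * n⁻¹ = (v * n * v⁻¹ * n⁻¹)⁻¹ * v := by group
  rw [hconj]
  exact mul_mem (hMZ (inv_mem (mem_centralizerModulo_iff.1 hv.2 n hn))) hv

end Algebra

theorem IsOpenMap.exists_isCompact_image_eq_univ {X Y : Type*} [TopologicalSpace X]
    [TopologicalSpace Y] [WeaklyLocallyCompactSpace X] [CompactSpace Y] {f : X → Y}
    (hf : IsOpenMap f) (hsurj : Function.Surjective f) : ∃ K, IsCompact K ∧ f '' K = univ := by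
  choose K hK using fun x : X => exists_compact_mem_nhds x
  obtain ⟨t, ht⟩ := isCompact_univ.elim_finite_subcover (fun x => f '' interior (K x))
    (fun x => hf _ isOpen_interior) fun y _ => by
      obtain ⟨x, rfl⟩ := hsurj y
      exact mem_iUnion.2 ⟨x, mem_image_of_mem f (mem_interior_iff_mem_nhds.2 (hK x).2)⟩
  refine ⟨⋃ x ∈ t, K x, t.isCompact_biUnion fun x _ => (hK x).1, eq_univ_of_univ_subset ?_⟩
  rw [image_iUnion₂]
  exact ht.trans (iUnion₂_mono fun x _ => image_mono interior_subset)

section TopologicalGroup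

variable {G : Type*} [Group G] [TopologicalSpace G] [IsTopologicalGroup G]

theorem Subgroup.exists_isCompact_forall_inv_mul_mem [WeaklyLocallyCompactSpace G]
    (N : Subgroup G) [CompactSpace (G ⧸ N)] :
    ∃ C : Set G, IsCompact C ∧ ∀ g : G, ∃ c ∈ C, c⁻¹ * g ∈ N := by
  obtain ⟨C, hC, hCN⟩ :=
    (QuotientGroup.isOpenMap_coe (N := N)).exists_isCompact_image_eq_univ
      QuotientGroup.mk_surjective
  refine ⟨C, hC, fun g => ?_⟩
  obtain ⟨c, hc, hcg⟩ : (g : G ⧸ N) ∈ QuotientGroup.mk '' C := hCN ▸ mem_univ _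
  exact ⟨c, hc, QuotientGroup.eq.1 hcg⟩

theorem exists_isCompact_isOpen_subgroup_subset [LocallyCompactSpace G]
    [TotallyDisconnectedSpace G] {O : Set G} (hO : O ∈ 𝓝 1) :
    ∃ U : Subgroup G, IsCompact (U : Set G) ∧ IsOpen (U : Set G) ∧ (U : Set G) ⊆ O := by
  obtain ⟨s, ⟨hs, hsc⟩, hsO⟩ := (compact_basis_nhds (1 : G)).mem_iff.1 hO
  obtain ⟨W, hWclopen, h1W, hWs⟩ := loc_compact_Haus_tot_disc_of_zero_dim.mem_nhds_iff.1 hs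
  have hW : IsCompact W := hsc.of_isClosed_subset hWclopen.1 hWs
  obtain ⟨V, hV, hVW⟩ := compact_open_separated_mul_left hW hWclopen.2 subset_rfl
  have smul_subset {v : G} (hv : v ∈ V) : v • W ⊆ W := (smul_set_subset_mul hv).trans hVW
  set U := MulAction.stabilizer G W
  have hU : (U : Set G) ∈ 𝓝 (1 : G) := mem_of_superset (inter_mem hV (inv_mem_nhds_one G hV))
    fun v hv => (smul_subset hv.1).antisymm (subset_smul_set_iff.2 (smul_subset hv.2))
  have hUW : (U : Set G) ⊆ W := fun g hg => by
    simpa using (MulAction.mem_stabilizer_iff.1 hg).subset (smul_mem_smul_set h1W)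
  have hUo : IsOpen (U : Set G) := U.isOpen_of_mem_nhds hU
  exact ⟨U, hW.of_isClosed_subset (U.isClosed_of_isOpen hUo) hUW, hUo,
    hUW.trans (hWs.trans hsO)⟩

theorem IsCompact.eventually_forall_conj_mem {C W : Set G} (hC : IsCompact C) (hW : W ∈ 𝓝 1) :
    ∀ᶠ x in 𝓝 1, ∀ c ∈ C, c * x * c⁻¹ ∈ W := by
  refine hC.eventually_forall_of_forall_eventually fun c _ => ?_
  have : Tendsto (fun z : G × G => z.2 * z.1 * z.2⁻¹) (𝓝 (1, c)) (𝓝 1) := by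
    simpa using (by fun_prop : Continuous fun z : G × G => z.2 * z.1 * z.2⁻¹).tendsto (1, c)
  exact this hW

theorem Subgroup.exists_nhds_inter_subset_normalCore {N K : Subgroup G} [hN : N.Normal]
    {C : Set G} (hC : IsCompact C) (hcover : ∀ g : G, ∃ c ∈ C, c⁻¹ * g ∈ N)
    (hK : ∀ n ∈ N, ∀ k ∈ K, n * k * n⁻¹ ∈ K) {O : Set G} (hO : O ∈ 𝓝 1)
    (hOK : O ∩ N ⊆ K) : ∃ V ∈ 𝓝 (1 : G), V ∩ N ⊆ K.normalCore :=
  ⟨_, hC.eventually_forall_conj_mem hO, fun x hx =>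
    mem_normalCore_of_forall_conj_mem hcover hK fun c hc =>
      hOK ⟨hx.1 c hc, hN.conj_mem x hx.2 c⟩⟩

theorem Subgroup.isOpen_normalCore {N K : Subgroup G} [N.Normal]
    {C : Set G} (hC : IsCompact C) (hcover : ∀ g : G, ∃ c ∈ C, c⁻¹ * g ∈ N)
    (hK : ∀ n ∈ N, ∀ k ∈ K, n * k * n⁻¹ ∈ K) (hKo : IsOpen (K : Set G)) :
    IsOpen (K.normalCore : Set G) :=
  K.normalCore.isOpen_of_mem_nhds (g := 1) <|
    (hC.eventually_forall_conj_mem (hKo.mem_nhds K.one_mem)).mono fun _ hx =>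
      mem_normalCore_of_forall_conj_mem hcover hK hx

theorem Subgroup.exists_isCompact_closure_eq_of_cocompact {N : Subgroup G}
    (hN : IsClosed (N : Set G)) {X C : Set G} (hX : IsCompact X) (hXgen : closure X = ⊤)
    (hC : IsCompact C) (hcover : ∀ g : G, ∃ c ∈ C, c⁻¹ * g ∈ N) :
    ∃ S : Set G, IsCompact S ∧ closure S = N :=
  ⟨_, (((hC.inv.mul (hX.union hX.inv)).mul hC).union hC).inter_right hN,
    le_antisymm ((closure_le N).2 inter_subset_right)
      (le_closure_inter_of_closure_eq_top hXgen hcover)⟩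

theorem Subgroup.exists_finset_le_closure_union {N : Subgroup G} {S V A : Set G}
    (hS : IsCompact S) (hSgen : closure S = N) (hV : V ∈ 𝓝 1) (hVA : V ∩ N ⊆ A) :
    ∃ t : Finset G, (t : Set G) ⊆ N ∧ N ≤ closure (t ∪ A) := by
  have hSN : S ⊆ N := hSgen ▸ subset_closure
  obtain ⟨t, htS, hcover⟩ := hS.elim_nhds_subcover (fun f => f • V)
    fun f _ => by simpa using smul_mem_nhds_smul f hV
  refine ⟨t, fun f hf => hSN (htS f hf), ?_⟩
  rw [← hSgen, closure_le]
  intro s hs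
  obtain ⟨f, hf, v, hv, rfl⟩ := mem_iUnion₂.1 (hcover hs)
  have hvN : v ∈ N := by simpa using mul_mem (inv_mem (hSN (htS f hf))) (hSN hs)
  exact mul_mem (subset_closure (Or.inl hf)) (subset_closure (Or.inr (hVA ⟨hv, hvN⟩)))

theorem Subgroup.isOpen_centralizerModulo {N M : Subgroup G} [hN : N.Normal] [hM : M.Normal]
    {S V : Set G} (hS : IsCompact S) (hSgen : closure S = N) (hV : V ∈ 𝓝 1)
    (hVM : V ∩ N ⊆ M) : IsOpen (N.centralizerModulo M : Set G) := by
  obtain ⟨t, htN, hNt⟩ := exists_finset_le_closure_union hS hSgen hV hVM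
  have hnear : ∀ᶠ g in 𝓝 (1 : G), ∀ f ∈ t, g * f * g⁻¹ * f⁻¹ ∈ V := by
    refine (t.eventually_all).2 fun f _ => ?_
    have : Tendsto (fun g : G => g * f * g⁻¹ * f⁻¹) (𝓝 1) (𝓝 1) := by
      simpa using (by fun_prop : Continuous fun g : G => g * f * g⁻¹ * f⁻¹).tendsto 1
    exact this hV
  refine (N.centralizerModulo M).isOpen_of_mem_nhds (g := 1) (mem_of_superset hnear ?_)
  intro g hg
  set Z := (centralizer {(g : G ⧸ M)}).comap (QuotientGroup.mk' M)
  have hZ {n : G} : n ∈ Z ↔ g * n * g⁻¹ * n⁻¹ ∈ M := by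
    simp [Z, mem_centralizer_singleton_iff, ← QuotientGroup.commute_mk_iff, Commute, SemiconjBy,
      eq_comm]
  -- `Z` is a subgroup containing the generators `t ∪ M` of `N`
  have hNZ : N ≤ Z := hNt.trans <| (closure_le Z).2 <| union_subset
    (fun f hf => hZ.2 (hVM ⟨hg f hf, mul_mem (hN.conj_mem f (htN hf) g) (inv_mem (htN hf))⟩))
    fun m hm => hZ.2 (mul_mem (hM.conj_mem m hm g) (inv_mem hm))
  exact mem_centralizerModulo_iff.2 fun n hn => hZ.1 (hNZ hn)

end TopologicalGroup

theorem SIN_of_cocompact_SIN_normal_general (G : Type*) [Group G] [TopologicalSpace G]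
    [IsTopologicalGroup G] [LocallyCompactSpace G] [TotallyDisconnectedSpace G]
    (hcg : ∃ X : Set G, IsCompact X ∧ Subgroup.closure X = ⊤)
    (N : Subgroup G) [N.Normal] (hNc : IsClosed (N : Set G))
    (hcocompact : CompactSpace (G ⧸ N))
    -- N is a SIN group: every neighbourhood of 1 contains a compact relatively open
    -- subgroup of N which is normal in N
    (hNSIN : ∀ O : Set G, IsOpen O → (1 : G) ∈ O →
      ∃ K : Subgroup G, K ≤ N ∧ IsCompact (K : Set G) ∧
        (∃ O' : Set G, IsOpen O' ∧ (K : Set G) = O' ∩ (N : Set G)) ∧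
        (∀ n ∈ N, ∀ k ∈ K, n * k * n⁻¹ ∈ K) ∧ (K : Set G) ⊆ O) :
    -- G is a SIN group: a basis at 1 of compact open normal subgroups
    ∀ O : Set G, IsOpen O → (1 : G) ∈ O →
      ∃ K : Subgroup G, K.Normal ∧ IsCompact (K : Set G) ∧ IsOpen (K : Set G) ∧
        (K : Set G) ⊆ O := by
  intro O hO h1O
  obtain ⟨X, hX, hXgen⟩ := hcg
  obtain ⟨C, hC, hcover⟩ := N.exists_isCompact_forall_inv_mul_mem
  obtain ⟨U, hUc, hUo, hUO⟩ := exists_isCompact_isOpen_subgroup_subset (hO.mem_nhds h1O)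
  obtain ⟨K, -, -, ⟨O', hO', hKO'⟩, hKnorm, hKU⟩ := hNSIN U hUo U.one_mem
  obtain ⟨V, hV, hVM⟩ := Subgroup.exists_nhds_inter_subset_normalCore hC hcover hKnorm
    (hO'.mem_nhds (hKO'.subset K.one_mem).1) hKO'.ge
  obtain ⟨S, hS, hSgen⟩ := N.exists_isCompact_closure_eq_of_cocompact hNc hX hXgen hC hcover
  set P := U ⊓ N.centralizerModulo K.normalCore
  have hPo : IsOpen (P : Set G) := hUo.inter (Subgroup.isOpen_centralizerModulo hS hSgen hV hVM)
  have hPc : IsCompact (P : Set G) :=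
    hUc.of_isClosed_subset (P.isClosed_of_isOpen hPo) inf_le_left
  refine ⟨P.normalCore, P.normalCore_normal,
    hPc.of_isClosed_subset (P.normalCore_isClosed hPc.isClosed) P.normalCore_le,
    Subgroup.isOpen_normalCore hC hcover (fun n hn v hv => ?_) hPo,
    fun x hx => hUO (P.normalCore_le hx).1⟩
  exact Subgroup.conj_mem_inf_centralizerModulo (K.normalCore_le.trans hKU) hn hv

/-- If a compactly generated t.d.l.c.s.c. group `G` has a closed cocompact normal subgroup
`N` which is a SIN group, then `G` is a SIN group. -/
theorem SIN_of_cocompact_SIN_normal (G : Type*) [Group G] [TopologicalSpace G]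
    [IsTopologicalGroup G] [LocallyCompactSpace G] [TotallyDisconnectedSpace G]
    [SecondCountableTopology G]
    (hcg : ∃ X : Set G, IsCompact X ∧ Subgroup.closure X = ⊤)
    (N : Subgroup G) [N.Normal] (hNc : IsClosed (N : Set G))
    (hcocompact : CompactSpace (G ⧸ N))
    -- N is a SIN group: every neighbourhood of 1 contains a compact relatively open
    -- subgroup of N which is normal in N
    (hNSIN : ∀ O : Set G, IsOpen O → (1 : G) ∈ O →
      ∃ K : Subgroup G, K ≤ N ∧ IsCompact (K : Set G) ∧
        (∃ O' : Set G, IsOpen O' ∧ (K : Set G) = O' ∩ (N : Set G)) ∧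
        (∀ n ∈ N, ∀ k ∈ K, n * k * n⁻¹ ∈ K) ∧ (K : Set G) ⊆ O) :
    -- G is a SIN group: a basis at 1 of compact open normal subgroups
    ∀ O : Set G, IsOpen O → (1 : G) ∈ O →
      ∃ K : Subgroup G, K.Normal ∧ IsCompact (K : Set G) ∧ IsOpen (K : Set G) ∧
        (K : Set G) ⊆ O :=
  SIN_of_cocompact_SIN_normal_general G hcg N hNc hcocompact hNSIN
end

section
/- Let G and H be totally disconnected locally compact second countable groups and ψ : H → G a continuous injective homomorphism with ψ(H) normal and dense in G. Then for every compact open subgroup W of H, the image ψ(W) is commensurated in G, i.e., gψ(W)g⁻¹ ∼_c ψ(W) for all g ∈ G. -/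
/-!
Fix `g ∈ G` and let `K = ψ⁻¹(g ψ(W) g⁻¹)`, a closed subgroup of `H` since `g ψ(W) g⁻¹` is
compact. Countably many translates of the open subgroup `W` cover the σ-compact group `H`;
because `ψ(H)` is normal, conjugating by `g` and pulling back along `ψ` turns them into countably
many translates of `K` covering `H`. By Baire category `K` is open, so `K ∩ W` has finite index in
the compact group `W`, i.e. `ψ(W) ∩ g ψ(W) g⁻¹` has finite index in `ψ(W)`. Applying this to `g⁻¹`
and conjugating back gives the other index.
-/

open Set Pointwise

namespace Subgroup

variable {G : Type*} [Group G]

theorem Commensurable.conj_of_forall_relIndex_ne_zero {K : Subgroup G}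
    (h : ∀ g : G, (MulAut.conj g • K).relIndex K ≠ 0) (g : G) :
    Commensurable (MulAut.conj g • K) K := by
  refine ⟨h g, ?_⟩
  rw [← relIndex_pointwise_smul (MulAut.conj g)⁻¹, inv_smul_smul, ← map_inv]
  exact h g⁻¹

variable [TopologicalSpace G] [IsTopologicalGroup G]

theorem relIndex_ne_zero_of_isOpen_of_isCompact {A B : Subgroup G} (hA : IsOpen (A : Set G))
    (hB : IsCompact (B : Set G)) : A.relIndex B ≠ 0 := by
  have : CompactSpace B := isCompact_iff_compactSpace.mp hB
  have : Finite (B ⧸ A.subgroupOf B) :=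
    quotient_finite_of_isOpen _ (hA.preimage continuous_subtype_val)
  exact index_ne_zero_of_finite

theorem isOpen_of_isClosed_of_mul_eq_univ [BaireSpace G] {K : Subgroup G}
    (hK : IsClosed (K : Set G)) {s : Set G} (hs : s.Countable) (hcover : s * (K : Set G) = univ) :
    IsOpen (K : Set G) := by
  have : Countable s := hs.to_subtype
  rw [← smul_eq_mul, ← iUnion_smul_set, biUnion_eq_iUnion] at hcover
  obtain ⟨x, hx⟩ := nonempty_interior_of_iUnion_of_closed (fun x : s ↦ hK.smul (x : G)) hcover
  rw [interior_smul, smul_set_nonempty] at hx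
  obtain ⟨y, hy⟩ := hx
  exact K.isOpen_of_mem_nhds (mem_interior_iff_mem_nhds.mp hy)

end Subgroup

section Pullback

variable {G H : Type*} [Group G] [Group H] {ψ : H →* G}

theorem exists_countable_mul_comap_conj_eq_univ (hN : ψ.range.Normal) (g : G) {W : Subgroup H}
    {s : Set H} (hs : s.Countable) (hcover : s * (W : Set H) = univ) :
    ∃ t : Set H, t.Countable ∧ t * ((MulAut.conj g • W.map ψ).comap ψ : Set H) = univ := by
  have hconj (c : G) (h : H) : ∃ h', ψ h' = c * ψ h * c⁻¹ := hN.conj_mem _ ⟨h, rfl⟩ c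
  choose κ hκ using hconj
  refine ⟨κ g '' s, hs.image _, eq_univ_of_forall fun h ↦ ?_⟩
  obtain ⟨x, hx, w, hw, hxw : x * w = κ g⁻¹ h⟩ := hcover ▸ mem_univ (κ g⁻¹ h)
  refine ⟨κ g x, mem_image_of_mem _ hx, (κ g x)⁻¹ * h, ?_, mul_inv_cancel_left _ _⟩
  rw [SetLike.mem_coe, Subgroup.mem_comap, Subgroup.mem_pointwise_smul_iff_inv_smul_mem]
  refine ⟨w, hw, ?_⟩
  have hψxw : ψ x * ψ w = g⁻¹ * ψ h * g := by rw [← map_mul, hxw, hκ, inv_inv]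
  change ψ w = g⁻¹ * ψ ((κ g x)⁻¹ * h) * g
  rw [eq_inv_mul_of_mul_eq hψxw, map_mul, map_inv, hκ]
  group

variable [TopologicalSpace G] [IsTopologicalGroup G] [TopologicalSpace H]

theorem isClosed_comap_conj_map [T2Space G] (hψ : Continuous ψ) {W : Subgroup H}
    (hW : IsCompact (W : Set H)) (g : G) :
    IsClosed ((MulAut.conj g • W.map ψ).comap ψ : Set H) :=
  have hconj : IsCompact ((MulAut.conj g • W.map ψ : Subgroup G) : Set G) :=
    (hW.image hψ).image (f := fun x ↦ g * x * g⁻¹) (by fun_prop)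
  hconj.isClosed.preimage hψ

theorem isOpen_comap_conj_map [T2Space G] [IsTopologicalGroup H] [BaireSpace H]
    [SigmaCompactSpace H] (hψ : Continuous ψ) (hN : ψ.range.Normal) {W : Subgroup H}
    (hWc : IsCompact (W : Set H)) (hWo : IsOpen (W : Set H)) (g : G) :
    IsOpen ((MulAut.conj g • W.map ψ).comap ψ : Set H) := by
  obtain ⟨s, hs, hcover⟩ := countable_cover_nhds_of_sigmaCompact fun x : H ↦
    (hWo.smul x).mem_nhds ⟨1, W.one_mem, mul_one x⟩
  rw [iUnion_smul_set, smul_eq_mul] at hcover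
  obtain ⟨t, ht, htcover⟩ := exists_countable_mul_comap_conj_eq_univ hN g hs hcover
  exact Subgroup.isOpen_of_isClosed_of_mul_eq_univ (isClosed_comap_conj_map hψ hWc g) ht htcover

end Pullback

theorem image_of_compact_open_commensurated_general
    (G H : Type*) [Group G] [TopologicalSpace G] [IsTopologicalGroup G]
    [TotallyDisconnectedSpace G]
    [Group H] [TopologicalSpace H] [IsTopologicalGroup H]
    [LocallyCompactSpace H] [SecondCountableTopology H]
    (ψ : H →* G) (hcont : Continuous ψ)
    (hnormal : ((⊤ : Subgroup H).map ψ).Normal) :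
    ∀ W : Subgroup H, IsCompact (W : Set H) → IsOpen (W : Set H) →
      ∀ g : G, Subgroup.Commensurable ((W.map ψ).map (MulAut.conj g).toMonoidHom) (W.map ψ) := by
  intro W hWc hWo
  refine Subgroup.Commensurable.conj_of_forall_relIndex_ne_zero fun g ↦ ?_
  rw [← Subgroup.relIndex_comap]
  exact Subgroup.relIndex_ne_zero_of_isOpen_of_isCompact
    (isOpen_comap_conj_map hcont (ψ.range_eq_map ▸ hnormal) hWc hWo g) hWc

/-- Let `ψ : H → G` be a continuous injective homomorphism of t.d.l.c.s.c. groups with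
normal dense image. Then the image of every compact open subgroup of `H` is commensurated
in `G`. -/
theorem image_of_compact_open_commensurated
    (G H : Type*) [Group G] [TopologicalSpace G] [IsTopologicalGroup G]
    [LocallyCompactSpace G] [TotallyDisconnectedSpace G] [SecondCountableTopology G]
    [Group H] [TopologicalSpace H] [IsTopologicalGroup H]
    [LocallyCompactSpace H] [TotallyDisconnectedSpace H] [SecondCountableTopology H]
    (ψ : H →* G) (hcont : Continuous ψ) (hinj : Function.Injective ψ)
    (hnormal : ((⊤ : Subgroup H).map ψ).Normal) (hdense : Dense (Set.range ψ)) :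
    ∀ W : Subgroup H, IsCompact (W : Set H) → IsOpen (W : Set H) →
      ∀ g : G, Subgroup.Commensurable ((W.map ψ).map (MulAut.conj g).toMonoidHom) (W.map ψ) :=
  image_of_compact_open_commensurated_general G H ψ hcont hnormal
end

section
/- Let G and H be totally disconnected locally compact second countable groups and ψ : H → G a continuous injective homomorphism with ψ(H) normal and dense in G. Then for every compact open subgroup U of G, there exists a compact open subgroup W of H with ψ(W) normal in U. -/
/-!
For `g ∈ G`, conjugation by `g` preserves the normal subgroup `ψ(H)` and so transports to an
automorphism of `H`. Its graph is closed, hence it is continuous by the open mapping theorem for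
σ-compact groups, and the compact group `U` acts on `H` by continuous automorphisms.

Fix a compact open `V ≤ H` with `ψ(V) ≤ U` and a neighbourhood basis `Oₙ` of `1` in `H`. The
closed sets `{u ∈ U | u • Oₙ ⊆ V}` cover `U`, so by Baire one of them contains a coset `u₀ U₁` of
an open subgroup `U₁`. The subgroup generated by the sets `u • O'`, `u ∈ U₁`, for a compact open
`O' ⊆ Oₙ`, lies in `u₀⁻¹ • V`, so it is compact open and `U₁`-invariant. As `U₁` has finite index
in `U`, the intersection of its finitely many `U`-translates is a `U`-invariant compact open `W`.
-/

open Set Filter Topology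
open scoped Pointwise

/-- Van Dantzig's theorem. -/
theorem exists_subgroup_isCompact_isOpen_subset {H : Type*} [Group H] [TopologicalSpace H]
    [IsTopologicalGroup H] [LocallyCompactSpace H] [TotallyDisconnectedSpace H]
    {O : Set H} (hO : O ∈ 𝓝 (1 : H)) :
    ∃ V : Subgroup H, IsCompact (V : Set H) ∧ IsOpen (V : Set H) ∧ (V : Set H) ⊆ O := by
  obtain ⟨K, hK, hKO, hKc⟩ := local_compact_nhds hO
  obtain ⟨s, hs, h1s, hsK⟩ :=
    loc_compact_Haus_tot_disc_of_zero_dim.mem_nhds_iff.mp (interior_mem_nhds.mpr hK)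
  have hsc : IsCompact s := hKc.of_isClosed_subset hs.isClosed (hsK.trans interior_subset)
  obtain ⟨T, hT, hsT⟩ := compact_open_separated_mul_right hsc hs.isOpen subset_rfl
  let V := Subgroup.closure (T ∩ T⁻¹)
  have hVs : ∀ x ∈ V, ∀ y ∈ s, y * x ∈ s := by
    intro x hx
    induction hx using Subgroup.closure_induction'' with
    | mem x hx => exact fun y hy ↦ hsT (mul_mem_mul hy hx.1)
    | inv_mem x hx => exact fun y hy ↦ hsT (mul_mem_mul hy hx.2)
    | one => simp
    | mul x z _ _ hx hz => exact fun y hy ↦ mul_assoc y x z ▸ hz _ (hx y hy)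
  have hVsub : (V : Set H) ⊆ s := fun x hx ↦ one_mul x ▸ hVs x hx 1 h1s
  have hVo : IsOpen (V : Set H) := V.isOpen_of_mem_nhds (g := 1) <|
    mem_of_superset (inter_mem hT (inv_mem_nhds_one H hT)) Subgroup.subset_closure
  exact ⟨V, hsc.of_isClosed_subset (V.isClosed_of_isOpen hVo) hVsub, hVo,
    hVsub.trans (hsK.trans (interior_subset.trans hKO))⟩

theorem MonoidHom.continuous_of_isClosed_graph {H K : Type*} [Group H] [TopologicalSpace H]
    [IsTopologicalGroup H] [BaireSpace H] [T2Space H] [SigmaCompactSpace H]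
    [Group K] [TopologicalSpace K] [IsTopologicalGroup K] [SigmaCompactSpace K]
    (f : H →* K) (hf : IsClosed (f.graph : Set (H × K))) : Continuous f := by
  have : SigmaCompactSpace f.graph := hf.sigmaCompactSpace
  let π : f.graph →* H := (MonoidHom.fst H K).comp f.graph.subtype
  have hπ : Continuous π := continuous_fst.comp continuous_subtype_val
  have hπbij : Function.Bijective π :=
    ⟨fun p q hpq ↦ Subtype.ext (Prod.ext hpq (by rw [← p.2, ← q.2]; exact congrArg f hpq)),
      fun h ↦ ⟨⟨(h, f h), rfl⟩, rfl⟩⟩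
  let e : f.graph ≃ₜ H := (Equiv.ofBijective π hπbij).toHomeomorphOfContinuousOpen hπ
    (π.isOpenMap_of_sigmaCompact hπbij.2 hπ)
  have hfe : ⇑f = fun h ↦ ((e.symm h : f.graph) : H × K).2 := funext fun h ↦ by
    rw [← (e.symm h).2, show ((e.symm h : f.graph) : H × K).1 = e (e.symm h) from rfl,
      e.apply_symm_apply]
  rw [hfe]
  exact continuous_snd.comp (continuous_subtype_val.comp e.symm.continuous)

namespace MonoidHom

variable {G H : Type*} [Group G] [Group H] (ψ : H →* G) (hψ : Function.Injective ψ)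
  [ψ.range.Normal]

noncomputable def conjRange : G →* MulAut H :=
  (MulAut.congr (ofInjective hψ).symm).toMonoidHom.comp MulAut.conjNormal

theorem apply_conjRange_apply (g : G) (h : H) :
    ψ (ψ.conjRange hψ g h) = g * ψ h * g⁻¹ := by
  simp [conjRange, ofInjective_apply]

variable [TopologicalSpace G] [IsTopologicalGroup G] [T2Space G] [TopologicalSpace H]

theorem isClosed_setOf_conjRange_apply_mem (hψc : Continuous ψ) {K : Set H} (hK : IsCompact K)
    (h : H) : IsClosed {g : G | ψ.conjRange hψ g h ∈ K} := by
  have : {g : G | ψ.conjRange hψ g h ∈ K} = (fun g ↦ g * ψ h * g⁻¹) ⁻¹' (ψ '' K) := by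
    ext g
    rw [mem_preimage, ← ψ.apply_conjRange_apply hψ, hψ.mem_set_image]
    rfl
  rw [this]
  exact (hK.image hψc).isClosed.preimage (by fun_prop)

theorem continuous_conjRange_apply [IsTopologicalGroup H] [BaireSpace H] [T2Space H]
    [SigmaCompactSpace H] (hψc : Continuous ψ) (g : G) : Continuous (ψ.conjRange hψ g) := by
  refine continuous_of_isClosed_graph (ψ.conjRange hψ g).toMonoidHom ?_
  have : ((ψ.conjRange hψ g).toMonoidHom.graph : Set (H × H)) =
      {p | ψ p.2 = g * ψ p.1 * g⁻¹} := by
    ext p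
    show _ ↔ ψ p.2 = g * ψ p.1 * g⁻¹
    rw [← ψ.apply_conjRange_apply hψ, hψ.eq_iff, eq_comm]
    rfl
  rw [this]
  exact isClosed_eq (by fun_prop) (by fun_prop)

end MonoidHom

theorem exists_isOpen_nonempty_forall_smul_mem {Γ X : Type*} [TopologicalSpace Γ]
    [BaireSpace Γ] [Nonempty Γ] [TopologicalSpace X] [SMul Γ X] {x : X}
    [(𝓝 x).IsCountablyGenerated] {V : Set X} (hclosed : ∀ y, IsClosed {γ : Γ | γ • y ∈ V})
    (hnhds : ∀ γ : Γ, (γ • ·) ⁻¹' V ∈ 𝓝 x) :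
    ∃ N : Set Γ, IsOpen N ∧ N.Nonempty ∧ ∃ O ∈ 𝓝 x, ∀ γ ∈ N, ∀ y ∈ O, γ • y ∈ V := by
  obtain ⟨b, hb⟩ := (𝓝 x).exists_antitone_basis
  let F : ℕ → Set Γ := fun n ↦ ⋂ y ∈ b n, {γ | γ • y ∈ V}
  have hF : ⋃ n, F n = univ := eq_univ_of_forall fun γ ↦ by
    obtain ⟨n, -, hn⟩ := hb.toHasBasis.mem_iff.mp (hnhds γ)
    exact mem_iUnion.mpr ⟨n, mem_iInter₂.mpr hn⟩
  obtain ⟨n, hn⟩ :=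
    nonempty_interior_of_iUnion_of_closed (fun n ↦ isClosed_biInter fun y _ ↦ hclosed y) hF
  exact ⟨interior (F n), isOpen_interior, hn, b n, hb.mem n,
    fun γ hγ y hy ↦ mem_iInter₂.mp (interior_subset hγ) y hy⟩

section Action

variable {Γ H : Type*} [Group Γ] [Group H] [TopologicalSpace H] [IsTopologicalGroup H]
  [MulDistribMulAction Γ H]

theorem exists_isCompact_isOpen_le_stabilizer {Γ₁ : Subgroup Γ} {O K : Subgroup H}
    (hO : IsOpen (O : Set H)) (hK : IsCompact (K : Set H)) (hOK : ∀ γ ∈ Γ₁, γ • O ≤ K) :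
    ∃ W : Subgroup H, IsCompact (W : Set H) ∧ IsOpen (W : Set H) ∧ W ≤ K ∧
      Γ₁ ≤ MulAction.stabilizer Γ W := by
  let W := ⨆ γ : Γ₁, (γ : Γ) • O
  have hWK : W ≤ K := iSup_le fun γ ↦ hOK γ γ.2
  have hWo : IsOpen (W : Set H) :=
    Subgroup.isOpen_mono (le_iSup_of_le 1 (one_smul Γ O).ge) hO
  have hW : ∀ δ ∈ Γ₁, δ • W ≤ W := fun δ hδ ↦ Subgroup.pointwise_smul_subset_iff.mpr <|
    iSup_le fun γ ↦ Subgroup.subset_pointwise_smul_iff.mpr <| by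
      rw [inv_inv, smul_smul]
      exact le_iSup_of_le ⟨δ * γ, Γ₁.mul_mem hδ γ.2⟩ le_rfl
  refine ⟨W, hK.of_isClosed_subset (W.isClosed_of_isOpen hWo) hWK, hWo, hWK, fun δ hδ ↦ ?_⟩
  exact le_antisymm (hW δ hδ) (Subgroup.subset_pointwise_smul_iff.mpr (hW δ⁻¹ (inv_mem hδ)))

theorem exists_isCompact_isOpen_le_forall_smul_mem [ContinuousConstSMul Γ H]
    {Γ₁ : Subgroup Γ} [Γ₁.FiniteIndex] {W₁ : Subgroup H} (hc : IsCompact (W₁ : Set H))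
    (ho : IsOpen (W₁ : Set H)) (hΓ₁ : Γ₁ ≤ MulAction.stabilizer Γ W₁) :
    ∃ W : Subgroup H, IsCompact (W : Set H) ∧ IsOpen (W : Set H) ∧ W ≤ W₁ ∧
      ∀ γ : Γ, ∀ x ∈ W, γ • x ∈ W := by
  have : (MulAction.stabilizer Γ W₁).FiniteIndex := Subgroup.finiteIndex_of_le hΓ₁
  have hfin : (MulAction.orbit Γ W₁).Finite := Set.finite_of_ncard_ne_zero <|
    MulAction.index_stabilizer Γ W₁ ▸ Subgroup.FiniteIndex.index_ne_zero
  let W := ⨅ γ : Γ, γ • W₁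
  have hWo : IsOpen (W : Set H) := by
    rw [Subgroup.coe_iInf,
      ← biInter_range (f := fun γ : Γ ↦ γ • W₁) (g := fun K : Subgroup H ↦ (K : Set H))]
    refine hfin.isOpen_biInter ?_
    rintro _ ⟨γ, rfl⟩
    rw [Subgroup.coe_pointwise_smul]
    exact ho.smul γ
  have hWW₁ : W ≤ W₁ := iInf_le_of_le 1 (one_smul Γ W₁).le
  refine ⟨W, hc.of_isClosed_subset (W.isClosed_of_isOpen hWo) hWW₁, hWo, hWW₁,
    fun γ x hx ↦ Subgroup.mem_iInf.mpr fun δ ↦ ?_⟩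
  have := Subgroup.mem_iInf.mp hx (γ⁻¹ * δ)
  rwa [mul_smul, Subgroup.mem_inv_pointwise_smul_iff] at this

theorem exists_isCompact_isOpen_le_forall_smul_mem_of_isClosed [TopologicalSpace Γ]
    [IsTopologicalGroup Γ] [CompactSpace Γ] [TotallyDisconnectedSpace Γ] [LocallyCompactSpace H]
    [TotallyDisconnectedSpace H] [FirstCountableTopology H] [ContinuousConstSMul Γ H]
    {V : Subgroup H} (hVc : IsCompact (V : Set H)) (hVo : IsOpen (V : Set H))
    (hclosed : ∀ h : H, IsClosed {γ : Γ | γ • h ∈ V}) :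
    ∃ W : Subgroup H, IsCompact (W : Set H) ∧ IsOpen (W : Set H) ∧ W ≤ V ∧
      ∀ γ : Γ, ∀ x ∈ W, γ • x ∈ W := by
  obtain ⟨N, hNo, ⟨γ₀, hγ₀⟩, O, hO, hNO⟩ := exists_isOpen_nonempty_forall_smul_mem
    (x := (1 : H)) hclosed fun γ ↦ (continuous_const_smul γ).continuousAt.preimage_mem_nhds
      (by rw [smul_one]; exact hVo.mem_nhds V.one_mem)
  obtain ⟨Γ₁, hΓ₁N⟩ := ProfiniteGrp.exist_openNormalSubgroup_sub_open_nhds_of_one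
    (hNo.preimage (continuous_const_mul γ₀)) (by simpa)
  obtain ⟨O', -, hO'o, hO'O⟩ := exists_subgroup_isCompact_isOpen_subset hO
  have hO'V : ∀ γ ∈ Γ₁.toSubgroup, γ • O' ≤ γ₀⁻¹ • V := fun γ hγ z hz ↦ by
    obtain ⟨y, hy, rfl⟩ := (Subgroup.mem_smul_pointwise_iff_exists _ _ _).mp hz
    rw [Subgroup.mem_inv_pointwise_smul_iff, smul_smul]
    exact hNO _ (hΓ₁N hγ) y (hO'O hy)
  obtain ⟨W₁, hW₁c, hW₁o, hW₁V, hW₁⟩ := exists_isCompact_isOpen_le_stabilizer hO'o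
    (by rw [Subgroup.coe_pointwise_smul]; exact hVc.smul γ₀⁻¹) hO'V
  have : Γ₁.toSubgroup.FiniteIndex := Subgroup.finiteIndex_of_finite_quotient
  obtain ⟨W, hWc, hWo, hWW₁, hW⟩ := exists_isCompact_isOpen_le_forall_smul_mem hW₁c hW₁o hW₁
  refine ⟨W, hWc, hWo, fun x hx ↦ ?_, hW⟩
  exact Subgroup.smul_mem_pointwise_smul_iff.mp (hW₁V (hWW₁ (hW γ₀⁻¹ x hx)))

end Action

theorem exists_image_normal_in_compact_open_general
    (G H : Type*) [Group G] [TopologicalSpace G] [IsTopologicalGroup G]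
    [TotallyDisconnectedSpace G]
    [Group H] [TopologicalSpace H] [IsTopologicalGroup H]
    [LocallyCompactSpace H] [TotallyDisconnectedSpace H] [SecondCountableTopology H]
    (ψ : H →* G) (hcont : Continuous ψ) (hinj : Function.Injective ψ)
    (hnormal : ((⊤ : Subgroup H).map ψ).Normal) :
    ∀ U : Subgroup G, IsCompact (U : Set G) → IsOpen (U : Set G) →
      ∃ W : Subgroup H, IsCompact (W : Set H) ∧ IsOpen (W : Set H) ∧
        W.map ψ ≤ U ∧ ∀ u ∈ U, ∀ x ∈ W.map ψ, u * x * u⁻¹ ∈ W.map ψ := by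
  intro U hUc hUo
  have : ψ.range.Normal := ψ.range_eq_map ▸ hnormal
  have : CompactSpace U := isCompact_iff_compactSpace.mp hUc
  let _ : MulDistribMulAction U H := .compHom H ((ψ.conjRange hinj).comp U.subtype)
  have : ContinuousConstSMul U H := ⟨fun u ↦ ψ.continuous_conjRange_apply hinj hcont u⟩
  obtain ⟨V, hVc, hVo, hVU⟩ := exists_subgroup_isCompact_isOpen_subset
    ((hUo.preimage hcont).mem_nhds (by simp))
  obtain ⟨W, hWc, hWo, hWV, hW⟩ := exists_isCompact_isOpen_le_forall_smul_mem_of_isClosed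
    (Γ := U) hVc hVo fun h ↦
      (ψ.isClosed_setOf_conjRange_apply_mem hinj hcont hVc h).preimage continuous_subtype_val
  refine ⟨W, hWc, hWo, Subgroup.map_le_iff_le_comap.mpr fun w hw ↦ hVU (hWV hw), ?_⟩
  rintro u hu _ ⟨w, hw, rfl⟩
  exact ⟨_, hW ⟨u, hu⟩ w hw, ψ.apply_conjRange_apply hinj u w⟩

/-- Let `ψ : H → G` be a continuous injective homomorphism of t.d.l.c.s.c. groups with
normal dense image. Then for every compact open subgroup `U` of `G` there is a compact
open subgroup `W` of `H` with `ψ(W)` normal in `U`. -/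
theorem exists_image_normal_in_compact_open
    (G H : Type*) [Group G] [TopologicalSpace G] [IsTopologicalGroup G]
    [LocallyCompactSpace G] [TotallyDisconnectedSpace G] [SecondCountableTopology G]
    [Group H] [TopologicalSpace H] [IsTopologicalGroup H]
    [LocallyCompactSpace H] [TotallyDisconnectedSpace H] [SecondCountableTopology H]
    (ψ : H →* G) (hcont : Continuous ψ) (hinj : Function.Injective ψ)
    (hnormal : ((⊤ : Subgroup H).map ψ).Normal) (hdense : Dense (Set.range ψ)) :
    ∀ U : Subgroup G, IsCompact (U : Set G) → IsOpen (U : Set G) →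
      ∃ W : Subgroup H, IsCompact (W : Set H) ∧ IsOpen (W : Set H) ∧
        W.map ψ ≤ U ∧ ∀ u ∈ U, ∀ x ∈ W.map ψ, u * x * u⁻¹ ∈ W.map ψ :=
  exists_image_normal_in_compact_open_general G H ψ hcont hinj hnormal
end

section
/- Let U be a profinite group, B a closed normal subgroup such that U/B has dense quasi-centre, and A a closed normal subgroup of U that is open in B (so A ≤ B with B/A finite). Then U/A has dense quasi-centre. -/
/-!
The centralizer of `gN` in `U/N` pulls back to `{u | (u g)⁻¹ (g u) ∈ N}`. When `A = O ∩ B` with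
`O` open, this set for `A` is the one for `B` cut with the preimage of `O` under a continuous
map, so it is open as soon as the one for `B` is. Density then transfers along the open map
`U → U/B` and the continuous surjection `U → U/A`.
-/

open QuotientGroup

def quasiCentre (G : Type*) [Group G] [TopologicalSpace G] : Set G :=
  {x | IsOpen ((Subgroup.centralizer {x} : Subgroup G) : Set G)}

section

variable {G : Type*} [Group G]

theorem QuotientGroup.preimage_centralizer_singleton_mk (N : Subgroup G) [N.Normal] (g : G) :
    (mk ⁻¹' ((Subgroup.centralizer {(g : G ⧸ N)} : Subgroup (G ⧸ N)) : Set (G ⧸ N))) =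
      (fun u ↦ (u * g)⁻¹ * (g * u)) ⁻¹' (N : Set G) := by
  ext u
  simp only [Set.mem_preimage, SetLike.mem_coe, Subgroup.mem_centralizer_singleton_iff]
  rw [← mk_mul, ← mk_mul, QuotientGroup.eq]

variable [TopologicalSpace G]

theorem QuotientGroup.mk_mem_quasiCentre_iff (N : Subgroup G) [N.Normal] (g : G) :
    (g : G ⧸ N) ∈ quasiCentre (G ⧸ N) ↔
      IsOpen ((fun u ↦ (u * g)⁻¹ * (g * u)) ⁻¹' (N : Set G)) := by
  rw [← preimage_centralizer_singleton_mk]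
  exact (isQuotientMap_mk N).isOpen_preimage.symm

theorem QuotientGroup.mk_mem_quasiCentre_of_eq_inter [IsTopologicalGroup G]
    {A B : Subgroup G} [A.Normal] [B.Normal] {O : Set G} (hO : IsOpen O)
    (hAO : (A : Set G) = O ∩ B) {g : G} (hg : (g : G ⧸ B) ∈ quasiCentre (G ⧸ B)) :
    (g : G ⧸ A) ∈ quasiCentre (G ⧸ A) := by
  rw [mk_mem_quasiCentre_iff] at hg ⊢
  rw [hAO, Set.preimage_inter]
  exact (hO.preimage (by fun_prop)).inter hg

end

theorem dense_quasiCentre_of_quotient_general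
    (U : Type*) [Group U] [TopologicalSpace U] [IsTopologicalGroup U]
    (B A : Subgroup U) [B.Normal] [A.Normal]
    (hAopen : ∃ O : Set U, IsOpen O ∧ (A : Set U) = O ∩ (B : Set U))
    (hQZ : Dense {x : U ⧸ B |
      IsOpen ((Subgroup.centralizer {x} : Subgroup (U ⧸ B)) : Set (U ⧸ B))}) :
    Dense {x : U ⧸ A |
      IsOpen ((Subgroup.centralizer {x} : Subgroup (U ⧸ A)) : Set (U ⧸ A))} := by
  obtain ⟨O, hO, hAO⟩ := hAopen
  have hpre : Dense (mk ⁻¹' quasiCentre (U ⧸ B)) := hQZ.preimage isOpenMap_coe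
  refine (mk_surjective.denseRange.dense_image continuous_quot_mk hpre).mono ?_
  rintro _ ⟨g, hg, rfl⟩
  exact mk_mem_quasiCentre_of_eq_inter hO hAO hg

/-- Let `U` be a profinite group, `B ⊴ U` closed with `U/B` having dense quasi-centre,
and `A ⊴ U` closed with `A ≤ B` and `A` open in `B`. Then `U/A` has dense quasi-centre.
(The quasi-centre is the set of elements with open centralizer.) -/
theorem dense_quasiCentre_of_quotient
    (U : Type*) [Group U] [TopologicalSpace U] [IsTopologicalGroup U]
    [CompactSpace U] [TotallyDisconnectedSpace U]
    (B A : Subgroup U) [B.Normal] [A.Normal]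
    (hBc : IsClosed (B : Set U)) (hAc : IsClosed (A : Set U)) (hAB : A ≤ B)
    (hAopen : ∃ O : Set U, IsOpen O ∧ (A : Set U) = O ∩ (B : Set U))
    (hQZ : Dense {x : U ⧸ B |
      IsOpen ((Subgroup.centralizer {x} : Subgroup (U ⧸ B)) : Set (U ⧸ B))}) :
    Dense {x : U ⧸ A |
      IsOpen ((Subgroup.centralizer {x} : Subgroup (U ⧸ A)) : Set (U ⧸ A))} :=
  dense_quasiCentre_of_quotient_general U B A hAopen hQZ
end

section
/- Let U be a profinite group containing an infinite locally normal subgroup L belonging to the class [A]. Then U contains an infinite normal [A]-subgroup. -/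
/-!
Intersecting `L` with an open normal subgroup `W ≤ N_U(L)` gives an infinite `[A]`-subgroup
`M = L ∩ W` normalized by `W`. As `N_U(M) ⊇ W` is open, `M` has only finitely many conjugates;
they lie in `W` and are normalized by it, so their join `K` is the ordered product of finitely
many `[A]`-subgroups normal in `K`, hence in `[A]`. It is normal by construction, and closed as
the continuous image of a finite product of compact sets.
-/

/-- `P` behaves like membership in the class `[A]` for closed subgroups of a profinite
group `U`: it is invariant under conjugation, closed under passing to closed normal
subgroups, and closed under finite products of normal `P`-subgroups. -/
structure IsAClassOn (U : Type*) [Group U] [TopologicalSpace U]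
    (P : Subgroup U → Prop) : Prop where
  conj : ∀ L : Subgroup U, P L → ∀ u : U, P (L.map (MulAut.conj u).toMonoidHom)
  normal_sub : ∀ L : Subgroup U, P L → ∀ M : Subgroup U, IsClosed (M : Set U) → M ≤ L →
    (∀ l ∈ L, ∀ m ∈ M, l * m * l⁻¹ ∈ M) → P M
  prod : ∀ (W : Subgroup U) (n : ℕ) (V : Fin n → Subgroup U),
    (∀ i, P (V i)) → (∀ i, V i ≤ W) →
    (∀ i, ∀ w ∈ W, ∀ v ∈ V i, w * v * w⁻¹ ∈ V i) →
    ((W : Set U) = {x : U | ∃ f : Fin n → U, (∀ i, f i ∈ V i) ∧ x = (List.ofFn f).prod}) →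
    P W

namespace Subgroup

variable {G : Type*} [Group G]

theorem coe_iSup_eq_ofFn_prod_of_le_normalizer :
    ∀ {n : ℕ} (V : Fin n → Subgroup G), (∀ i j, V i ≤ normalizer (V j : Set G)) →
      ((⨆ i, V i : Subgroup G) : Set G) =
        {x | ∃ f : Fin n → G, (∀ i, f i ∈ V i) ∧ x = (List.ofFn f).prod}
  | 0, V, _ => by
    ext x
    simp [iSup_of_empty]
  | n + 1, V, hV => by
    have hsplit : ⨆ i, V i = V 0 ⊔ ⨆ i : Fin n, V i.succ :=
      le_antisymm
        (iSup_le_iff.mpr <| Fin.forall_fin_succ.mpr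
          ⟨le_sup_left, fun i => le_sup_of_le_right (le_iSup (fun j : Fin n => V j.succ) i)⟩)
        (sup_le (le_iSup V 0) (iSup_le fun i => le_iSup V i.succ))
    have h0 : V 0 ≤ normalizer ((⨆ i : Fin n, V i.succ : Subgroup G) : Set G) :=
      (le_iInf fun i : Fin n => hV 0 i.succ).trans
        (iInf_normalizer_le_normalizer_iSup fun i : Fin n => V i.succ)
    rw [hsplit, coe_mul_of_left_le_normalizer_right _ _ h0,
      coe_iSup_eq_ofFn_prod_of_le_normalizer (fun i => V i.succ) fun i j => hV _ _]
    ext x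
    simp only [Set.mem_mul, SetLike.mem_coe, Set.mem_ofPred_eq, List.ofFn_succ, List.prod_cons]
    constructor
    · rintro ⟨a, ha, _, ⟨f, hf, rfl⟩, rfl⟩
      exact ⟨Fin.cons a f, Fin.cases ha hf, by simp⟩
    · rintro ⟨f, hf, rfl⟩
      exact ⟨f 0, hf 0, _, ⟨_, fun i => hf i.succ, rfl⟩, rfl⟩

theorem map_conj_mul (H : Subgroup G) (a b : G) :
    H.map (MulAut.conj (a * b)).toMonoidHom =
      (H.map (MulAut.conj b).toMonoidHom).map (MulAut.conj a).toMonoidHom := by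
  rw [map_map]
  congr 1
  ext x
  simp [mul_assoc]

theorem finite_range_map_conj (H : Subgroup G) [Finite (G ⧸ normalizer (H : Set G))] :
    (Set.range fun g : G => H.map (MulAut.conj g).toMonoidHom).Finite := by
  let conjOf : G ⧸ normalizer (H : Set G) → Subgroup G :=
    Quotient.lift (fun g => H.map (MulAut.conj g).toMonoidHom) fun a b hab => by
      have hab := mem_normalizer_iff_map_conj_eq.mp (QuotientGroup.leftRel_apply.mp hab)
      rw [← MulEquiv.toMonoidHom_eq_coe] at hab
      rw [← mul_inv_cancel_left a b, map_conj_mul, hab]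
  exact (Set.finite_range conjOf).subset fun _ ⟨g, hg⟩ => ⟨g, hg⟩

theorem le_normalizer_map_conj {W H : Subgroup G} [hW : W.Normal]
    (h : W ≤ normalizer (H : Set G)) (g : G) :
    W ≤ normalizer (H.map (MulAut.conj g).toMonoidHom : Set G) := by
  rw [← map_equiv_normalizer_eq]
  intro w hw
  exact ⟨g⁻¹ * w * g, h (by simpa using hW.conj_mem w hw g⁻¹), by simp [mul_assoc]⟩

instance iSup_map_conj_normal (H : Subgroup G) :
    (⨆ g : G, H.map (MulAut.conj g).toMonoidHom).Normal := by
  rw [← normalizer_eq_top_iff, eq_top_iff]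
  intro h _
  rw [mem_normalizer_iff_map_conj_eq, ← MulEquiv.toMonoidHom_eq_coe, map_iSup]
  conv_rhs => rw [← (Equiv.mulLeft h).iSup_comp]
  simp only [Equiv.coe_mulLeft, map_conj_mul]

theorem infinite_inf_of_finiteIndex {H K : Subgroup G} [K.FiniteIndex]
    (hH : (H : Set G).Infinite) : ((H ⊓ K : Subgroup G) : Set G).Infinite := by
  intro hHK
  have : Finite (K.subgroupOf H) :=
    have := hHK.to_subtype
    Finite.of_injective
      (fun x : K.subgroupOf H => (⟨x.1.1, x.1.2, x.2⟩ : (H ⊓ K : Subgroup G))) fun x y hxy =>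
        Subtype.ext (Subtype.ext (congrArg (fun z : (H ⊓ K : Subgroup G) => (z : G)) hxy))
  exact hH (Set.finite_coe_iff.mp ((K.subgroupOf H).finite_iff_finite_and_finiteIndex.mpr
    ⟨this, inferInstance⟩))

end Subgroup

open Subgroup

theorem isCompact_iSup_of_le_normalizer {G : Type*} [Group G] [TopologicalSpace G]
    [ContinuousMul G] {n : ℕ} (V : Fin n → Subgroup G)
    (hV : ∀ i j, V i ≤ normalizer (V j : Set G)) (hc : ∀ i, IsCompact (V i : Set G)) :
    IsCompact ((⨆ i, V i : Subgroup G) : Set G) := by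
  have : ((⨆ i, V i : Subgroup G) : Set G) =
      (fun f : Fin n → G => (List.ofFn f).prod) '' Set.univ.pi fun i => V i := by
    rw [coe_iSup_eq_ofFn_prod_of_le_normalizer V hV]
    ext
    simp [eq_comm]
  rw [this]
  refine (isCompact_univ_pi hc).image ?_
  simp only [List.ofFn_eq_map]
  exact continuous_list_prod _ fun i _ => continuous_apply i

theorem IsAClassOn.exists_closed_infinite_normal {G : Type*} [Group G] [TopologicalSpace G]
    [IsTopologicalGroup G] [CompactSpace G] [T2Space G] {P : Subgroup G → Prop}
    (hP : IsAClassOn G P) {M W : Subgroup G} [hWn : W.Normal] (hW : IsOpen (W : Set G))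
    (hMW : M ≤ W) (hWM : W ≤ normalizer (M : Set G)) (hMc : IsClosed (M : Set G))
    (hMinf : (M : Set G).Infinite) (hMP : P M) :
    ∃ K : Subgroup G, IsClosed (K : Set G) ∧ (K : Set G).Infinite ∧ K.Normal ∧ P K := by
  have : Finite (G ⧸ normalizer (M : Set G)) :=
    quotient_finite_of_isOpen _ (isOpen_mono hWM hW)
  obtain ⟨n, V, -, hV⟩ := M.finite_range_map_conj.fin_param
  have hconj : ∀ i, ∃ g, M.map (MulAut.conj g).toMonoidHom = V i :=
    fun i => show V i ∈ Set.range _ from hV ▸ Set.mem_range_self i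
  have hVW : ∀ i, V i ≤ W := by
    intro i
    obtain ⟨g, hg⟩ := hconj i
    rw [← hg]
    rintro _ ⟨m, hm, rfl⟩
    exact hWn.conj_mem m (hMW hm) g
  have hWV : ∀ i, W ≤ normalizer (V i : Set G) := by
    intro i
    obtain ⟨g, hg⟩ := hconj i
    exact hg ▸ le_normalizer_map_conj hWM g
  have hVV : ∀ i j, V i ≤ normalizer (V j : Set G) := fun i j => (hVW i).trans (hWV j)
  have hK : ⨆ i, V i = ⨆ g : G, M.map (MulAut.conj g).toMonoidHom := congrArg sSup hV
  refine ⟨⨆ i, V i, (isCompact_iSup_of_le_normalizer V hVV fun i => ?_).isClosed, ?_,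
    hK ▸ iSup_map_conj_normal M, hP.prod _ n V (fun i => ?_) (le_iSup V) (fun i w hw v hv => ?_)
    (coe_iSup_eq_ofFn_prod_of_le_normalizer V hVV)⟩
  · obtain ⟨g, hg⟩ := hconj i
    rw [← hg, coe_map]
    exact hMc.isCompact.image ((continuous_const_mul g).mul continuous_const)
  · have hM : M ≤ ⨆ g : G, M.map (MulAut.conj g).toMonoidHom :=
      le_iSup_of_le 1 fun m hm => ⟨m, hm, by simp⟩
    exact hK ▸ hMinf.mono hM
  · obtain ⟨g, hg⟩ := hconj i
    exact hg ▸ hP.conj M hMP g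
  · exact (mem_normalizer_iff.mp (hWV i (iSup_le hVW hw)) v).mp hv

/-- If a profinite group `U` contains an infinite locally normal `[A]`-subgroup, then `U`
contains an infinite normal `[A]`-subgroup. -/
theorem infinite_normal_A_subgroup_of_locally_normal
    (U : Type*) [Group U] [TopologicalSpace U] [IsTopologicalGroup U]
    [CompactSpace U] [TotallyDisconnectedSpace U]
    (P : Subgroup U → Prop) (hP : IsAClassOn U P)
    (L : Subgroup U) (hLclosed : IsClosed (L : Set U)) (hLinf : (L : Set U).Infinite)
    (hLlocnorm : IsOpen ((Subgroup.normalizer (L : Set U) : Subgroup U) : Set U)) (hLA : P L) :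
    ∃ K : Subgroup U, IsClosed (K : Set U) ∧ (K : Set U).Infinite ∧ K.Normal ∧ P K := by
  obtain ⟨W, hWL⟩ := IsTopologicalGroup.exist_openNormalSubgroup_sub_clopen_nhds_of_one
    ⟨isClosed_of_isOpen _ hLlocnorm, hLlocnorm⟩ (one_mem _)
  have : W.toSubgroup.FiniteIndex := finiteIndex_of_finite_quotient
  set M : Subgroup U := L ⊓ W.toSubgroup
  have hLM : L ≤ normalizer (M : Set U) :=
    (le_inf le_normalizer le_normalizer_of_normal).trans inf_normalizer_le_normalizer_inf
  have hWM : W.toSubgroup ≤ normalizer (M : Set U) :=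
    (le_inf hWL le_normalizer).trans inf_normalizer_le_normalizer_inf
  have hMc : IsClosed (M : Set U) := hLclosed.inter W.toOpenSubgroup.isClosed
  have hMA : P M :=
    hP.normal_sub L hLA M hMc inf_le_left fun l hl m hm => (mem_normalizer_iff.mp (hLM hl) m).mp hm
  exact hP.exists_closed_infinite_normal W.isOpen inf_le_right hWM hMc
    (infinite_inf_of_finiteIndex hLinf) hMA
end

section
/- Let G be a compactly generated t.d.l.c. group acting vertex transitively on a connected locally finite graph Γ with compact open vertex stabilizers, and let H ⊴ G be a closed normal subgroup. Let σ be the G-congruence on VΓ induced by the H-orbits. Then the quotient graph Γ/σ is connected, locally finite, vertex transitive under the induced G/H-action, deg(Γ/σ) ≤ deg(Γ), and each vertex stabilizer in G/H is compact and open. -/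
/-- The quotient of a simple graph by an equivalence relation on its vertices: two blocks
are adjacent when they are distinct and contain adjacent representatives. -/
def quotientGraph {V : Type*} (Γ : SimpleGraph V) (s : Setoid V) :
    SimpleGraph (Quotient s) where
  Adj b c := b ≠ c ∧ ∃ v w : V, Quotient.mk s v = b ∧ Quotient.mk s w = c ∧ Γ.Adj v w
  symm := by
    refine ⟨?_⟩
    rintro b c ⟨hne, v, w, hv, hw, hadj⟩
    exact ⟨hne.symm, w, v, hw, hv, hadj.symm⟩
  loopless := by
    refine ⟨?_⟩
    rintro b ⟨hne, -⟩
    exact hne rfl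

/-!
A walk in `Γ` projects to a walk in `Γ/σ` once the steps inside a block are dropped, so
connectivity passes to the quotient. When `σ` is the orbit relation of a group of automorphisms,
every block adjacent to the block of `v` already contains a neighbour of `v`, which bounds the
degree. Finally, if `g` maps `v` into its own `H`-orbit, say `g • v = h • v`, then `h⁻¹ * g`
fixes `v` and has the same image as `g` in `G ⧸ H`; so the block stabilizer in `G ⧸ H` is the
image of a vertex stabilizer, compact and open with it.
-/

namespace SimpleGraph

variable {V : Type*} {Γ : SimpleGraph V}

theorem Reachable.quotientGraph_mk (s : Setoid V) {v w : V} (h : Γ.Reachable v w) :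
    (quotientGraph Γ s).Reachable (Quotient.mk s v) (Quotient.mk s w) := by
  obtain ⟨p⟩ := h
  induction p with
  | nil => rfl
  | @cons u x _ hadj _ ih =>
    by_cases hux : Quotient.mk s u = Quotient.mk s x
    · rwa [hux]
    · have hadj' : (quotientGraph Γ s).Adj (Quotient.mk s u) (Quotient.mk s x) :=
        ⟨hux, u, x, rfl, rfl, hadj⟩
      exact hadj'.reachable.trans ih

theorem Connected.quotientGraph (s : Setoid V) (h : Γ.Connected) :
    (quotientGraph Γ s).Connected :=
  haveI := h.nonempty.map (Quotient.mk s)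
  ⟨Quotient.ind₂ fun v w => (h.preconnected v w).quotientGraph_mk s⟩

theorem setOf_quotientGraph_orbitRel_adj_subset {K : Type*} [Group K] [MulAction K V]
    (hauto : ∀ (k : K) (v w : V), Γ.Adj v w → Γ.Adj (k • v) (k • w)) (v : V) :
    {c | (quotientGraph Γ (MulAction.orbitRel K V)).Adj (Quotient.mk _ v) c} ⊆
      Quotient.mk _ '' Γ.neighborSet v := by
  rintro _ ⟨-, v', w, hv', rfl, hadj⟩
  obtain ⟨k, rfl⟩ := Quotient.exact hv'
  refine ⟨k⁻¹ • w, ?_, Quotient.sound (MulAction.mem_orbit w k⁻¹)⟩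
  simpa using hauto k⁻¹ _ _ hadj

end SimpleGraph

theorem MulAction.image_mk_setOf_orbitRel_mk_smul_eq {G V : Type*} [Group G] [MulAction G V]
    (H : Subgroup G) [H.Normal] (v : V) :
    (QuotientGroup.mk (s := H)) ''
        {g : G | Quotient.mk (orbitRel H V) (g • v) = Quotient.mk _ v} =
      QuotientGroup.mk '' (stabilizer G v : Set G) := by
  refine subset_antisymm ?_ (Set.image_mono fun g (hg : g • v = v) => by simp [hg])
  rintro _ ⟨g, hg, rfl⟩
  obtain ⟨h, hh : (h : G) • v = g • v⟩ := Quotient.exact hg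
  refine ⟨(h : G)⁻¹ * g, ?_, ?_⟩
  · change ((h : G)⁻¹ * g) • v = v
    rw [mul_smul, ← hh, inv_smul_smul]
  · rw [QuotientGroup.mk_mul, (QuotientGroup.eq_one_iff _).mpr (inv_mem h.2), one_mul]

theorem quotient_cayley_abels_graph_general
    (G : Type*) [Group G] [TopologicalSpace G] [IsTopologicalGroup G]
    (V : Type*) (Γ : SimpleGraph V) [MulAction G V]
    -- G acts by graph automorphisms
    (hauto : ∀ (g : G) (v w : V), Γ.Adj v w ↔ Γ.Adj (g • v) (g • w))
    -- vertex transitively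
    (htrans : ∀ v w : V, ∃ g : G, g • v = w)
    -- with compact open stabilizers
    (hstab : ∀ v : V, IsCompact ((MulAction.stabilizer G v : Subgroup G) : Set G) ∧
      IsOpen ((MulAction.stabilizer G v : Subgroup G) : Set G))
    -- on a connected locally finite graph
    (hconn : Γ.Connected) (hlf : ∀ v : V, (Γ.neighborSet v).Finite)
    -- H is a closed normal subgroup
    (H : Subgroup G) [H.Normal] :
    -- σ is the G-congruence induced by the H-orbits
    ∀ s : Setoid V, s = MulAction.orbitRel H V →
      (quotientGraph Γ s).Connected ∧
      (∀ b : Quotient s, {c : Quotient s | (quotientGraph Γ s).Adj b c}.Finite) ∧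
      -- G/H acts (vertex) transitively on the blocks
      (∀ v w : V, ∃ g : G, Quotient.mk s (g • v) = Quotient.mk s w) ∧
      -- deg(Γ/σ) ≤ deg(Γ)
      (∀ v : V, {c : Quotient s | (quotientGraph Γ s).Adj (Quotient.mk s v) c}.ncard ≤
        (Γ.neighborSet v).ncard) ∧
      -- block stabilizers in G/H are compact and open
      (∀ v : V,
        IsCompact ((QuotientGroup.mk (s := H)) ''
          {g : G | Quotient.mk s (g • v) = Quotient.mk s v}) ∧
        IsOpen ((QuotientGroup.mk (s := H)) ''
          {g : G | Quotient.mk s (g • v) = Quotient.mk s v})) := by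
  rintro s rfl
  have hsub := Γ.setOf_quotientGraph_orbitRel_adj_subset (K := H) fun h v w => (hauto h v w).mp
  refine ⟨hconn.quotientGraph _, Quotient.ind fun v => ((hlf v).image _).subset (hsub v),
    fun v w => ?_, fun v => ?_, fun v => ?_⟩
  · obtain ⟨g, rfl⟩ := htrans v w
    exact ⟨g, rfl⟩
  · exact (Set.ncard_le_ncard (hsub v) ((hlf v).image _)).trans (Set.ncard_image_le (hlf v))
  · rw [MulAction.image_mk_setOf_orbitRel_mk_smul_eq]
    exact ⟨(hstab v).1.image continuous_quotient_mk', QuotientGroup.isOpenMap_coe _ (hstab v).2⟩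

/-- Quotient of a Cayley–Abels graph by the orbits of a closed normal subgroup: the
quotient graph is connected, locally finite, vertex transitive under the induced `G/H`
action, has degree at most `deg(Γ)`, and the block stabilizers in `G/H` are compact and
open. -/
theorem quotient_cayley_abels_graph
    (G : Type*) [Group G] [TopologicalSpace G] [IsTopologicalGroup G]
    [LocallyCompactSpace G] [TotallyDisconnectedSpace G]
    (hcg : ∃ X : Set G, IsCompact X ∧ Subgroup.closure X = ⊤)
    (V : Type*) (Γ : SimpleGraph V) [MulAction G V]
    -- G acts by graph automorphisms
    (hauto : ∀ (g : G) (v w : V), Γ.Adj v w ↔ Γ.Adj (g • v) (g • w))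
    -- vertex transitively
    (htrans : ∀ v w : V, ∃ g : G, g • v = w)
    -- with compact open stabilizers
    (hstab : ∀ v : V, IsCompact ((MulAction.stabilizer G v : Subgroup G) : Set G) ∧
      IsOpen ((MulAction.stabilizer G v : Subgroup G) : Set G))
    -- on a connected locally finite graph
    (hconn : Γ.Connected) (hlf : ∀ v : V, (Γ.neighborSet v).Finite)
    -- H is a closed normal subgroup
    (H : Subgroup G) [H.Normal] (hHc : IsClosed (H : Set G)) :
    -- σ is the G-congruence induced by the H-orbits
    ∀ s : Setoid V, s = MulAction.orbitRel H V →
      (quotientGraph Γ s).Connected ∧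
      (∀ b : Quotient s, {c : Quotient s | (quotientGraph Γ s).Adj b c}.Finite) ∧
      -- G/H acts (vertex) transitively on the blocks
      (∀ v w : V, ∃ g : G, Quotient.mk s (g • v) = Quotient.mk s w) ∧
      -- deg(Γ/σ) ≤ deg(Γ)
      (∀ v : V, {c : Quotient s | (quotientGraph Γ s).Adj (Quotient.mk s v) c}.ncard ≤
        (Γ.neighborSet v).ncard) ∧
      -- block stabilizers in G/H are compact and open
      (∀ v : V,
        IsCompact ((QuotientGroup.mk (s := H)) ''
          {g : G | Quotient.mk s (g • v) = Quotient.mk s v}) ∧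
        IsOpen ((QuotientGroup.mk (s := H)) ''
          {g : G | Quotient.mk s (g • v) = Quotient.mk s v})) :=
  quotient_cayley_abels_graph_general G V Γ hauto htrans hstab hconn hlf H
end
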